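/- arXiv:0910.3038 — 9 statements merged into one kernel-verified Lean document; each statement's English description precedes it below -/
import Mathlib

section
/- Every automorphism of the free group F(A,B) of rank two sends the commutator [A,B] = ABA⁻¹B⁻¹ to a conjugate of [A,B] or of its inverse [B,A]. -/
abbrev F2 := FreeGroup Bool

def A : F2 := FreeGroup.of true

def B : F2 := FreeGroup.of false

/-- `(x, y)` is a basis (free generating pair) of the free group `F2 = F(A,B)`. -/
def IsBasis (x y : F2) : Prop := ∃ e : F2 ≃* F2, e A = x ∧ e B = y

/-- `w` is primitive: it is part of some basis of `F2`. -/
def IsPrimitive (w : F2) : Prop := ∃ x y : F2, IsBasis x y ∧ (w = x ∨ w = y)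

/-!
Nielsen reduction. Write `|w|` for reduced word length. As `(φ A, φ B)` generates `F2`, it
suffices to show that `⁅x, y⁆` is conjugate to `⁅A, B⁆` or its inverse for every generating
pair `(x, y)`. This property is invariant under the moves `(x, y) ↦ (y, x), (x⁻¹, y),
(x * y, y)`, which preserve generating pairs. Suppose a generating pair fails it and has
`|x| + |y|` minimal. No move shortens it, which is condition (N1) for `S = {x, x⁻¹, y, y⁻¹}`.
If (N2) held as well (no element of `S` is cancelled completely by its neighbours in a
product), then every product of `n` elements of `S` without cancelling neighbours would have
length at least `n`, so the letters `A` and `B` would lie in `S`, and the property would hold.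
Under (N1), (N2) can fail only when some `p ∈ S` cancels exactly half of some `q ∈ S` on both
sides; up to symmetry `p = x`, `q = y`. Then `(x * y, y)` is another minimal counterexample,
in which no such configuration can occur any more.

Cancellation in `x * y` is measured by the common prefix of the reduced words of `x⁻¹` and
`y`; its length is the Gromov product in the Cayley tree, which satisfies the ultrametric
inequality, and most of the word combinatorics reduces to that inequality.
-/

namespace List

variable {β : Type*} [DecidableEq β]

def commonPrefixLength : List β → List β → ℕ
  | a :: l₁, b :: l₂ => if a = b then commonPrefixLength l₁ l₂ + 1 else 0
  | _, _ => 0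

theorem le_commonPrefixLength_iff {k : ℕ} {l₁ l₂ : List β} :
    k ≤ commonPrefixLength l₁ l₂ ↔ k ≤ l₁.length ∧ k ≤ l₂.length ∧ l₁.take k = l₂.take k := by
  induction l₁ generalizing k l₂ with
  | nil => cases l₂ <;> simp +contextual [commonPrefixLength]
  | cons a l₁ ih =>
    cases l₂ with
    | nil => simp +contextual [commonPrefixLength]
    | cons b l₂ =>
      cases k with
      | zero => simp
      | succ k => by_cases hab : a = b <;> simp [commonPrefixLength, hab, ih]

theorem commonPrefixLength_comm (l₁ l₂ : List β) :
    commonPrefixLength l₁ l₂ = commonPrefixLength l₂ l₁ := by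
  induction l₁ generalizing l₂ with
  | nil => cases l₂ <;> rfl
  | cons a l₁ ih => cases l₂ <;> simp [commonPrefixLength, ih, eq_comm]

theorem commonPrefixLength_le_length_left (l₁ l₂ : List β) :
    commonPrefixLength l₁ l₂ ≤ l₁.length :=
  (le_commonPrefixLength_iff.1 le_rfl).1

theorem commonPrefixLength_le_length_right (l₁ l₂ : List β) :
    commonPrefixLength l₁ l₂ ≤ l₂.length :=
  (le_commonPrefixLength_iff.1 le_rfl).2.1

theorem commonPrefixLength_self (l : List β) : commonPrefixLength l l = l.length :=
  (commonPrefixLength_le_length_left l l).antisymm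
    (le_commonPrefixLength_iff.2 ⟨le_rfl, le_rfl, rfl⟩)

theorem length_le_commonPrefixLength_append (l l₁ l₂ : List β) :
    l.length ≤ commonPrefixLength (l ++ l₁) (l ++ l₂) :=
  le_commonPrefixLength_iff.2 ⟨by simp, by simp, by simp⟩

theorem min_le_commonPrefixLength (l₁ l₂ l₃ : List β) :
    min (commonPrefixLength l₁ l₂) (commonPrefixLength l₂ l₃) ≤ commonPrefixLength l₁ l₃ := by
  obtain ⟨h₁, -, h₁₂⟩ := le_commonPrefixLength_iff.1 (min_le_left (commonPrefixLength l₁ l₂)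
    (commonPrefixLength l₂ l₃))
  obtain ⟨-, h₃, h₂₃⟩ := le_commonPrefixLength_iff.1 (min_le_right (commonPrefixLength l₁ l₂)
    (commonPrefixLength l₂ l₃))
  exact le_commonPrefixLength_iff.2 ⟨h₁, h₃, h₁₂.trans h₂₃⟩

theorem commonPrefixLength_eq_of_lt {l₁ l₂ l₃ : List β}
    (h : commonPrefixLength l₂ l₃ < commonPrefixLength l₁ l₂) :
    commonPrefixLength l₁ l₃ = commonPrefixLength l₂ l₃ := by
  have h₁₃ := min_le_commonPrefixLength l₁ l₂ l₃
  have h₂₃ := min_le_commonPrefixLength l₂ l₁ l₃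
  rw [commonPrefixLength_comm l₂ l₁] at h₂₃
  omega

theorem ne_of_mem_head?_drop_commonPrefixLength {l₁ l₂ : List β} {a b : β}
    (ha : a ∈ (l₁.drop (commonPrefixLength l₁ l₂)).head?)
    (hb : b ∈ (l₂.drop (commonPrefixLength l₁ l₂)).head?) : a ≠ b := by
  rintro rfl
  set n := commonPrefixLength l₁ l₂
  rw [head?_drop, Option.mem_def] at ha hb
  have : n + 1 ≤ n := le_commonPrefixLength_iff.2
    ⟨(getElem?_eq_some_iff.1 ha).1, (getElem?_eq_some_iff.1 hb).1, by
      rw [take_add_one, take_add_one, ha, hb, (le_commonPrefixLength_iff.1 le_rfl).2.2]⟩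
  omega

end List

namespace FreeGroup

variable {α : Type*}

theorem IsReduced.invRev {L : List (α × Bool)} (h : IsReduced L) : IsReduced (invRev L) := by
  simp only [IsReduced, FreeGroup.invRev, List.isChain_reverse, List.isChain_map]
  exact h.imp fun a b hab e => by simp_all

theorem two_mul_commonPrefixLength_invRev_lt [DecidableEq α] {w : List (α × Bool)}
    (hw : IsReduced w) (hne : w ≠ []) : 2 * w.commonPrefixLength (invRev w) < w.length := by
  by_contra! hle
  set n := w.length
  obtain ⟨hkn, -, htake⟩ :=
    List.le_commonPrefixLength_iff.1 (le_refl (w.commonPrefixLength (invRev w)))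
  have hn : 0 < n := List.length_pos_iff.2 hne
  have hj : (n - 1) / 2 < w.commonPrefixLength (invRev w) := by omega
  -- the middle letter of `w` is inverse to its right neighbour (`n` even) or to itself (`n` odd)
  have hletter : w[(n - 1) / 2] = (w[n - 1 - (n - 1) / 2].1, !w[n - 1 - (n - 1) / 2].2) := by
    have := congrArg (·[(n - 1) / 2]?) htake
    simp only [List.getElem?_take_of_lt hj] at this
    rw [FreeGroup.invRev, List.getElem?_eq_getElem (by omega),
      List.getElem?_eq_getElem (by simp; omega), Option.some_inj, List.getElem_reverse] at this
    simpa using this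
  rcases Nat.even_or_odd n with ⟨m, hm⟩ | ⟨m, hm⟩
  · have hrel := List.isChain_iff_getElem.1 hw ((n - 1) / 2) (by omega)
    have e : n - 1 - (n - 1) / 2 = (n - 1) / 2 + 1 := by omega
    simp only [e] at hletter
    rw [hletter] at hrel
    simp at hrel
  · have e : n - 1 - (n - 1) / 2 = (n - 1) / 2 := by omega
    simp only [e] at hletter
    have := congrArg Prod.snd hletter
    simp at this

variable [DecidableEq α]

def commonPrefixLength (x y : FreeGroup α) : ℕ := x.toWord.commonPrefixLength y.toWord

theorem toWord_inv_mul (x y : FreeGroup α) :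
    (x⁻¹ * y).toWord = invRev (x.toWord.drop (commonPrefixLength x y)) ++
      y.toWord.drop (commonPrefixLength x y) := by
  set k := commonPrefixLength x y
  have htake : x.toWord.take k = y.toWord.take k := (List.le_commonPrefixLength_iff.1 le_rfl).2.2
  have hprod : x⁻¹ * y = mk (invRev (x.toWord.drop k) ++ y.toWord.drop k) := by
    conv_lhs => rw [← mk_toWord (x := x), ← mk_toWord (x := y), ← List.take_append_drop k x.toWord,
      ← List.take_append_drop k y.toWord, htake]
    simp only [← mul_mk, ← inv_mk, mul_inv_rev, mul_assoc, inv_mul_cancel_left]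
  have hred : IsReduced (invRev (x.toWord.drop k) ++ y.toWord.drop k) := by
    refine List.isChain_append.2 ⟨(isReduced_toWord.infix (List.drop_suffix _ _).isInfix).invRev,
      isReduced_toWord.infix (List.drop_suffix _ _).isInfix, ?_⟩
    intro a ha b hb
    simp only [FreeGroup.invRev, List.getLast?_reverse, List.head?_map, Option.mem_map] at ha
    obtain ⟨c, hc, rfl⟩ := ha
    have := List.ne_of_mem_head?_drop_commonPrefixLength hc hb
    grind
  rw [hprod, toWord_mk, hred.reduce_eq]

theorem norm_inv_mul_add (x y : FreeGroup α) :
    (x⁻¹ * y).norm + 2 * commonPrefixLength x y = x.norm + y.norm := by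
  have hx := List.commonPrefixLength_le_length_left x.toWord y.toWord
  have hy := List.commonPrefixLength_le_length_right x.toWord y.toWord
  simp only [norm, toWord_inv_mul, List.length_append, invRev_length, List.length_drop]
  unfold commonPrefixLength
  omega

theorem norm_mul_add (x y : FreeGroup α) :
    (x * y).norm + 2 * commonPrefixLength x⁻¹ y = x.norm + y.norm := by
  simpa [norm_inv_eq] using norm_inv_mul_add x⁻¹ y

theorem norm_sub_le_commonPrefixLength_inv_mul (x y : FreeGroup α) :
    x.norm - commonPrefixLength x y ≤ commonPrefixLength (x⁻¹ * y) x⁻¹ := by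
  have h := List.length_le_commonPrefixLength_append
    (invRev (x.toWord.drop (commonPrefixLength x y))) (y.toWord.drop (commonPrefixLength x y))
    (invRev (x.toWord.take (commonPrefixLength x y)))
  rwa [← invRev_append, List.take_append_drop, ← toWord_inv_mul, ← toWord_inv, invRev_length,
    List.length_drop] at h

theorem commonPrefixLength_comm (x y : FreeGroup α) :
    commonPrefixLength x y = commonPrefixLength y x :=
  List.commonPrefixLength_comm _ _

theorem commonPrefixLength_self (x : FreeGroup α) : commonPrefixLength x x = x.norm :=
  List.commonPrefixLength_self _

theorem min_le_commonPrefixLength (x y z : FreeGroup α) :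
    min (commonPrefixLength x y) (commonPrefixLength y z) ≤ commonPrefixLength x z :=
  List.min_le_commonPrefixLength _ _ _

theorem commonPrefixLength_eq_of_lt {x y z : FreeGroup α}
    (h : commonPrefixLength y z < commonPrefixLength x y) :
    commonPrefixLength x z = commonPrefixLength y z :=
  List.commonPrefixLength_eq_of_lt h

theorem two_mul_commonPrefixLength_inv_lt {x : FreeGroup α} (hx : x ≠ 1) :
    2 * commonPrefixLength x x⁻¹ < x.norm := by
  rw [commonPrefixLength, toWord_inv]
  exact two_mul_commonPrefixLength_invRev_lt isReduced_toWord (mt toWord_eq_nil_iff.1 hx)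

/-- Conditions (N0)–(N2) of Lyndon–Schupp, Ch. I.2, with (N2) in the form: no element of `S` is
cancelled completely by its neighbours in a product. -/
structure IsNielsenReduced (S : Set (FreeGroup α)) : Prop where
  one_notMem : 1 ∉ S
  norm_le_norm_mul : ∀ g ∈ S, ∀ h ∈ S, g * h ≠ 1 → g.norm ≤ (g * h).norm ∧ h.norm ≤ (g * h).norm
  commonPrefixLength_add_lt : ∀ g₁ ∈ S, ∀ g ∈ S, ∀ g₂ ∈ S, g₁ * g ≠ 1 → g * g₂ ≠ 1 →
    commonPrefixLength g₁⁻¹ g + commonPrefixLength g⁻¹ g₂ < g.norm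

namespace IsNielsenReduced

variable {S : Set (FreeGroup α)} (hS : IsNielsenReduced S)
include hS

theorem two_mul_commonPrefixLength_le {g h : FreeGroup α} (hg : g ∈ S) (hh : h ∈ S)
    (hgh : g * h ≠ 1) :
    2 * commonPrefixLength g⁻¹ h ≤ g.norm ∧ 2 * commonPrefixLength g⁻¹ h ≤ h.norm := by
  have := hS.norm_le_norm_mul g hg h hh hgh
  have := norm_mul_add g h
  omega

theorem norm_pos {g : FreeGroup α} (hg : g ∈ S) : 0 < g.norm :=
  Nat.pos_of_ne_zero fun h => hS.one_notMem (norm_eq_zero.1 h ▸ hg)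

/-- The invariant: `P` is a product of `n + 1` elements of `S`, the last one `g`, of which a
suffix of length `m` survives in `P` and is too long to be cancelled by the next factor. -/
theorem add_length_le_norm_mul_prod :
    ∀ (l : List (FreeGroup α)) (P g : FreeGroup α) (n m : ℕ), g ∈ S → (∀ h ∈ l, h ∈ S) →
      (g :: l).IsChain (fun a b => a * b ≠ 1) → 0 < m → m ≤ commonPrefixLength P⁻¹ g⁻¹ →
      n + m ≤ P.norm → (∀ h ∈ S, g * h ≠ 1 → commonPrefixLength g⁻¹ h < m) →
      n + 1 + l.length ≤ (P * l.prod).norm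
  | [], P, g, n, m, _, _, _, hm, _, hP, _ => by
    simp only [List.length_nil, List.prod_nil, mul_one]
    omega
  | h :: l, P, g, n, m, hg, hl, hchain, _, hsuffix, hP, hcancel => by
    obtain ⟨hgh, hchain⟩ := List.isChain_cons_cons.1 hchain
    have hh : h ∈ S := hl h (by simp)
    have hc := hcancel h hh hgh
    have hPh : commonPrefixLength P⁻¹ h = commonPrefixLength g⁻¹ h :=
      commonPrefixLength_eq_of_lt (hc.trans_le hsuffix)
    have hnorm := norm_mul_add P h
    have hsuffix' := norm_sub_le_commonPrefixLength_inv_mul h P⁻¹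
    rw [commonPrefixLength_comm, hPh, ← mul_inv_rev] at hsuffix'
    have hhalf := (hS.two_mul_commonPrefixLength_le hg hh hgh).2
    have := hS.norm_pos hh
    have := hS.commonPrefixLength_add_lt g hg h hh
    have key := add_length_le_norm_mul_prod l (P * h) h (n + 1)
      (h.norm - commonPrefixLength g⁻¹ h) hh (fun a ha => hl a (by simp [ha])) hchain (by omega)
      hsuffix' (by omega) (fun a ha hha => by have := this a ha hgh hha; omega)
    simp only [List.prod_cons, List.length_cons, ← mul_assoc]
    omega

theorem length_le_norm_prod {l : List (FreeGroup α)} (hl : ∀ g ∈ l, g ∈ S)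
    (hchain : l.IsChain (fun a b => a * b ≠ 1)) : l.length ≤ l.prod.norm := by
  cases l with
  | nil => simp
  | cons g l =>
    have hg : g ∈ S := hl g (by simp)
    have := hS.add_length_le_norm_mul_prod l g g 0 g.norm hg (fun h hh => hl h (by simp [hh]))
      hchain (hS.norm_pos hg) (by rw [commonPrefixLength_self, norm_inv_eq]) (by simp)
      (fun h hh hgh => by
        have := hS.two_mul_commonPrefixLength_le hg hh hgh
        have := hS.norm_pos hg
        omega)
    simpa [add_comm 1] using this

theorem exists_list_length_le_norm (hinv : ∀ g ∈ S, g⁻¹ ∈ S) {g : FreeGroup α}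
    (hg : g ∈ Subgroup.closure S) :
    ∃ l : List (FreeGroup α), (∀ h ∈ l, h ∈ S) ∧ l.prod = g ∧ l.length ≤ g.norm := by
  classical
  have hex : ∃ n, ∃ l : List (FreeGroup α), (∀ h ∈ l, h ∈ S) ∧ l.prod = g ∧ l.length = n := by
    have hS' : S ∪ S⁻¹ = S :=
      Set.union_eq_left.2 fun h hh => by simpa using hinv _ (Set.mem_inv.1 hh)
    rw [← Subgroup.mem_toSubmonoid, Subgroup.closure_toSubmonoid, hS'] at hg
    obtain ⟨l, hl, rfl⟩ := Submonoid.exists_list_of_mem_closure hg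
    exact ⟨_, l, hl, rfl, rfl⟩
  obtain ⟨l, hl, hprod, hlen⟩ := Nat.find_spec hex
  refine ⟨l, hl, hprod, hprod ▸ hS.length_le_norm_prod hl ?_⟩
  -- a shortest word in `S` has no cancelling neighbours
  rw [List.isChain_iff_forall_rel_of_append_cons_cons]
  rintro a b l₁ l₂ rfl hab
  rw [mul_eq_one_iff_eq_inv.1 hab] at hl hprod hlen
  refine Nat.find_min hex (m := (l₁ ++ l₂).length) (by simp [← hlen])
    ⟨l₁ ++ l₂, fun h hh => hl h (by simp only [List.mem_append, List.mem_cons] at hh ⊢; tauto), by simpa using hprod, rfl⟩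

theorem mem_of_norm_eq_one (hinv : ∀ g ∈ S, g⁻¹ ∈ S) {g : FreeGroup α}
    (hg : g ∈ Subgroup.closure S) (hg1 : g.norm = 1) : g ∈ S := by
  obtain ⟨l, hl, rfl, hlen⟩ := hS.exists_list_length_le_norm hinv hg
  rcases l with _ | ⟨h, _ | ⟨h', l⟩⟩
  · simp at hg1
  · simpa using hl h (by simp)
  · simp only [List.length_cons, hg1] at hlen
    omega

end IsNielsenReduced

def HalfCancels (p q : FreeGroup α) : Prop :=
  q.norm = 2 * commonPrefixLength p⁻¹ q ∧ q.norm = 2 * commonPrefixLength q⁻¹ p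

theorem halfCancels_of_le_add {g₁ g g₂ : FreeGroup α} (hg : g ≠ 1) (hg₂ : g₂ = g₁ ∨ g₂ = g₁⁻¹)
    (h₁ : 2 * commonPrefixLength g₁⁻¹ g ≤ g.norm) (h₂ : 2 * commonPrefixLength g⁻¹ g₂ ≤ g.norm)
    (hle : g.norm ≤ commonPrefixLength g₁⁻¹ g + commonPrefixLength g⁻¹ g₂) : HalfCancels g₁ g := by
  rcases hg₂ with rfl | rfl
  · exact ⟨by omega, by omega⟩
  · have := min_le_commonPrefixLength g g₁⁻¹ g⁻¹
    have := two_mul_commonPrefixLength_inv_lt hg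
    rw [commonPrefixLength_comm g g₁⁻¹, commonPrefixLength_comm g₁⁻¹ g⁻¹] at *
    omega

end FreeGroup

section ConjUpToInv

variable {G : Type*} [Group G]

def IsConjUpToInv (g h : G) : Prop := IsConj g h ∨ IsConj g h⁻¹

theorem IsConj.inv {g h : G} (hgh : IsConj g h) : IsConj g⁻¹ h⁻¹ := by
  obtain ⟨c, rfl⟩ := isConj_iff.1 hgh
  exact isConj_iff.2 ⟨c, by group⟩

theorem IsConjUpToInv.trans {a b c : G} (hab : IsConjUpToInv a b) (hbc : IsConjUpToInv b c) :
    IsConjUpToInv a c := by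
  rcases hab with hab | hab <;> rcases hbc with hbc | hbc
  · exact Or.inl (hab.trans hbc)
  · exact Or.inr (hab.trans hbc)
  · exact Or.inr (hab.trans hbc.inv)
  · exact Or.inl (by simpa using hab.trans hbc.inv)

end ConjUpToInv

section PairSet

variable {G : Type*} [Group G]

def pairSet (x y : G) : Set G := {x, x⁻¹, y, y⁻¹}

theorem mem_pairSet {x y g : G} : g ∈ pairSet x y ↔ g = x ∨ g = x⁻¹ ∨ g = y ∨ g = y⁻¹ := Iff.rfl

theorem inv_mem_pairSet {x y g : G} (hg : g ∈ pairSet x y) : g⁻¹ ∈ pairSet x y := by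
  rw [mem_pairSet] at *
  rcases hg with rfl | rfl | rfl | rfl <;> simp

theorem eq_or_eq_inv_of_mem_pairSet {x y g p q : G} (hg : g ∈ pairSet x y) (hp : p ∈ pairSet x y)
    (hq : q ∈ pairSet x y) (hpg : p ≠ g) (hpg' : p ≠ g⁻¹) (hqg : q ≠ g) (hqg' : q ≠ g⁻¹) :
    q = p ∨ q = p⁻¹ := by
  rw [mem_pairSet] at hg hp hq
  rcases hg with rfl | rfl | rfl | rfl <;> rcases hp with rfl | rfl | rfl | rfl <;>
    rcases hq with rfl | rfl | rfl | rfl <;> simp_all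

theorem closure_pairSet (x y : G) : Subgroup.closure (pairSet x y) = Subgroup.closure {x, y} := by
  refine le_antisymm ((Subgroup.closure_le _).2 ?_) (Subgroup.closure_mono ?_)
  · rintro g (rfl | rfl | rfl | rfl) <;> rw [SetLike.mem_coe] <;> try rw [inv_mem_iff]
    all_goals exact Subgroup.subset_closure (by simp)
  · rintro g (rfl | rfl) <;> simp [mem_pairSet]

theorem closure_pair_inv_left (x y : G) :
    Subgroup.closure {x⁻¹, y} = Subgroup.closure {x, y} := by
  rw [← closure_pairSet, ← closure_pairSet]
  congr 1
  ext g
  simp only [mem_pairSet, inv_inv]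
  tauto

theorem closure_pair_mul_right (x y : G) :
    Subgroup.closure {x * y, y} = Subgroup.closure {x, y} := by
  have hxy : x * y ∈ Subgroup.closure {x * y, y} := Subgroup.subset_closure (Set.mem_insert _ _)
  have hy : y ∈ Subgroup.closure {x * y, y} := Subgroup.subset_closure (Set.mem_insert_of_mem _ rfl)
  have hx : x ∈ Subgroup.closure {x, y} := Subgroup.subset_closure (Set.mem_insert _ _)
  have hy' : y ∈ Subgroup.closure {x, y} := Subgroup.subset_closure (Set.mem_insert_of_mem _ rfl)
  apply le_antisymm <;> rw [Subgroup.closure_le, Set.pair_subset_iff]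
  · exact ⟨mul_mem hx hy', hy'⟩
  · exact ⟨by simpa using mul_mem hxy (inv_mem hy), hy⟩

end PairSet

open FreeGroup Subgroup
open scoped commutatorElement

theorem closure_singleton_ne_top (w : F2) : closure {w} ≠ ⊤ := by
  intro hw
  have hA : A ∈ zpowers w := zpowers_eq_closure w ▸ hw ▸ mem_top A
  have hB : B ∈ zpowers w := zpowers_eq_closure w ▸ hw ▸ mem_top B
  obtain ⟨m, hm⟩ := mem_zpowers_iff.1 hA
  obtain ⟨n, hn⟩ := mem_zpowers_iff.1 hB
  have hAB : A * B ≠ B * A := by decide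
  exact hAB (hm ▸ hn ▸ (Commute.zpow_zpow_self w m n).eq)

theorem ne_one_of_closure_pair_eq_top {x y : F2} (h : closure {x, y} = ⊤) : x ≠ 1 ∧ y ≠ 1 := by
  constructor <;> rintro rfl
  · exact closure_singleton_ne_top y (by rwa [closure_insert_one] at h)
  · exact closure_singleton_ne_top x (by rwa [Set.pair_comm, closure_insert_one] at h)

def IsCounterexample (x y : F2) : Prop := closure {x, y} = ⊤ ∧ ¬ IsConjUpToInv ⁅x, y⁆ ⁅A, B⁆

def IsMinCounterexample (x y : F2) : Prop :=
  IsCounterexample x y ∧ ∀ x' y', IsCounterexample x' y' → x.norm + y.norm ≤ x'.norm + y'.norm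

namespace IsCounterexample

variable {x y : F2}

theorem of_closure_eq {x' y' : F2} (h : IsCounterexample x y)
    (hcl : closure {x', y'} = closure {x, y}) (hc : IsConjUpToInv ⁅x, y⁆ ⁅x', y'⁆) :
    IsCounterexample x' y' :=
  ⟨hcl.trans h.1, fun h' => h.2 (hc.trans h')⟩

theorem swap (h : IsCounterexample x y) : IsCounterexample y x :=
  h.of_closure_eq (by rw [Set.pair_comm]) (Or.inr (by rw [commutatorElement_inv]))

theorem inv_left (h : IsCounterexample x y) : IsCounterexample x⁻¹ y :=
  h.of_closure_eq (closure_pair_inv_left x y)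
    (Or.inr (isConj_iff.2 ⟨x⁻¹, by simp only [commutatorElement_def]; group⟩))

theorem mul_right (h : IsCounterexample x y) : IsCounterexample (x * y) y :=
  h.of_closure_eq (closure_pair_mul_right x y)
    (Or.inl (isConj_iff.2 ⟨1, by simp only [commutatorElement_def]; group⟩))

theorem exists_isMinCounterexample (h : IsCounterexample x y) :
    ∃ x' y', IsMinCounterexample x' y' := by
  obtain ⟨⟨x', y'⟩, hc, hmin⟩ := (measure fun p : F2 × F2 => p.1.norm + p.2.norm).wf.has_min
    {p | IsCounterexample p.1 p.2} ⟨(x, y), h⟩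
  exact ⟨x', y', hc, fun a b hab => not_lt.1 (hmin (a, b) hab)⟩

end IsCounterexample

namespace IsMinCounterexample

variable {x y : F2} (hmin : IsMinCounterexample x y)
include hmin

theorem of_counterexample {x' y' : F2} (h : IsCounterexample x' y')
    (hn : x'.norm + y'.norm ≤ x.norm + y.norm) : IsMinCounterexample x' y' :=
  ⟨h, fun a b hab => hn.trans (hmin.2 a b hab)⟩

theorem swap : IsMinCounterexample y x :=
  hmin.of_counterexample hmin.1.swap (by omega)

theorem inv_left : IsMinCounterexample x⁻¹ y :=
  hmin.of_counterexample hmin.1.inv_left (by rw [norm_inv_eq])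

theorem inv_right : IsMinCounterexample x y⁻¹ :=
  hmin.swap.inv_left.swap

theorem norm_le_norm_mul : x.norm ≤ (x * y).norm := by
  have := hmin.2 _ _ hmin.1.mul_right
  omega

theorem mul_right (hn : (x * y).norm = x.norm) : IsMinCounterexample (x * y) y :=
  hmin.of_counterexample hmin.1.mul_right (by omega)

theorem ne_one_of_mem {g : F2} (hg : g ∈ pairSet x y) : g ≠ 1 := by
  obtain ⟨hx, hy⟩ := ne_one_of_closure_pair_eq_top hmin.1.1
  rcases hg with rfl | rfl | rfl | rfl <;> simpa

theorem of_mem_pairSet {p q : F2} (hp : p ∈ pairSet x y) (hq : q ∈ pairSet x y) (hpq : p ≠ q)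
    (hpq' : p ≠ q⁻¹) : IsMinCounterexample p q := by
  rw [mem_pairSet] at hp hq
  rcases hp with rfl | rfl | rfl | rfl <;> rcases hq with rfl | rfl | rfl | rfl <;>
    first
    | exact absurd rfl hpq
    | exact absurd rfl hpq'
    | exact absurd (inv_inv _).symm hpq'
    | exact hmin
    | exact hmin.inv_left
    | exact hmin.inv_right
    | exact hmin.inv_left.inv_right
    | exact hmin.swap
    | exact hmin.swap.inv_left
    | exact hmin.swap.inv_right
    | exact hmin.swap.inv_left.inv_right

theorem norm_le_norm_mul_of_mem {g k : F2} (hg : g ∈ pairSet x y) (hk : k ∈ pairSet x y)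
    (hgk : g * k ≠ 1) : g.norm ≤ (g * k).norm ∧ k.norm ≤ (g * k).norm := by
  by_cases hkg : k = g
  · subst hkg
    have := norm_mul_add k k
    have := two_mul_commonPrefixLength_inv_lt (hmin.ne_one_of_mem hg)
    rw [commonPrefixLength_comm] at this
    omega
  have hgk' : g ≠ k⁻¹ := fun e => hgk (by rw [e, inv_mul_cancel])
  refine ⟨(hmin.of_mem_pairSet hg hk (Ne.symm hkg) hgk').norm_le_norm_mul, ?_⟩
  have := (hmin.of_mem_pairSet (inv_mem_pairSet hk) (inv_mem_pairSet hg) (inv_injective.ne hkg)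
    (by rwa [inv_inv, ne_comm])).norm_le_norm_mul
  rwa [← mul_inv_rev, norm_inv_eq, norm_inv_eq] at this

theorem not_isNielsenReduced : ¬ IsNielsenReduced (pairSet x y) := fun hS => by
  have hcl : closure (pairSet x y) = ⊤ := (closure_pairSet x y).trans hmin.1.1
  have hA := hS.mem_of_norm_eq_one (fun _ => inv_mem_pairSet) (hcl ▸ mem_top A) (norm_of true)
  have hB := hS.mem_of_norm_eq_one (fun _ => inv_mem_pairSet) (hcl ▸ mem_top B) (norm_of false)
  exact (hmin.of_mem_pairSet hA hB (by decide) (by decide)).1.2 (Or.inl (IsConj.refl _))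

theorem exists_halfCancels :
    ∃ p ∈ pairSet x y, ∃ q ∈ pairSet x y, p ≠ q ∧ p ≠ q⁻¹ ∧ HalfCancels p q := by
  by_contra hnone
  refine hmin.not_isNielsenReduced ⟨fun h1 => hmin.ne_one_of_mem h1 rfl,
    fun g hg k hk => hmin.norm_le_norm_mul_of_mem hg hk, ?_⟩
  intro g₁ hg₁ g hg g₂ hg₂ h₁ h₂
  by_contra! hle
  have hne := hmin.ne_one_of_mem hg
  have hc₁ : 2 * commonPrefixLength g₁⁻¹ g ≤ g.norm := by
    have := (hmin.norm_le_norm_mul_of_mem hg₁ hg h₁).1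
    have := norm_mul_add g₁ g
    omega
  have hc₂ : 2 * commonPrefixLength g⁻¹ g₂ ≤ g.norm := by
    have := (hmin.norm_le_norm_mul_of_mem hg hg₂ h₂).2
    have := norm_mul_add g g₂
    omega
  have hself := two_mul_commonPrefixLength_inv_lt hne
  rw [commonPrefixLength_comm] at hself
  have hg₁g : g₁ ≠ g := by rintro rfl; omega
  have hg₂g : g₂ ≠ g := by rintro rfl; omega
  have hg₁g' : g₁ ≠ g⁻¹ := by rintro rfl; exact h₁ (inv_mul_cancel g)
  have hg₂g' : g₂ ≠ g⁻¹ := by rintro rfl; exact h₂ (mul_inv_cancel g)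
  exact hnone ⟨g₁, hg₁, g, hg, hg₁g, hg₁g', halfCancels_of_le_add hne
    (eq_or_eq_inv_of_mem_pairSet hg hg₁ hg₂ hg₁g hg₁g' hg₂g hg₂g') hc₁ hc₂ hle⟩

theorem not_halfCancels : ¬ HalfCancels x y := by
  rintro ⟨hy, hyx⟩
  have hnorm := norm_mul_add x y
  have hnorm' := norm_mul_add y x
  have hx : 2 * commonPrefixLength x⁻¹ y ≤ x.norm := by
    have := hmin.swap.norm_le_norm_mul
    omega
  have hself := two_mul_commonPrefixLength_inv_lt (ne_one_of_closure_pair_eq_top hmin.1.1).2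
  -- `x * y` ends with the second half of `y` and begins with the first half of `x`, which is
  -- the first half of `y⁻¹`; but `y` and `y⁻¹` have no common prefix of half the length of `y`
  have hend : commonPrefixLength (x * y)⁻¹ y < commonPrefixLength x⁻¹ y := by
    have hsuffix := norm_sub_le_commonPrefixLength_inv_mul y x⁻¹
    rw [commonPrefixLength_comm y, ← mul_inv_rev] at hsuffix
    have := min_le_commonPrefixLength y (x * y)⁻¹ y⁻¹
    rw [commonPrefixLength_comm y (x * y)⁻¹] at this
    omega
  have hstart : commonPrefixLength (x * y) y < commonPrefixLength x⁻¹ y := by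
    have hprefix := norm_sub_le_commonPrefixLength_inv_mul x⁻¹ y
    rw [inv_inv, norm_inv_eq] at hprefix
    have h₁ := min_le_commonPrefixLength (x * y) x y⁻¹
    have h₂ := min_le_commonPrefixLength y (x * y) y⁻¹
    rw [commonPrefixLength_comm x] at h₁
    rw [commonPrefixLength_comm y (x * y)] at h₂
    omega
  have hend' := commonPrefixLength_comm y (x * y)⁻¹ ▸ hend
  have hstart' := commonPrefixLength_comm y (x * y) ▸ hstart
  obtain ⟨p, hp, q, hq, hpq, hpq', hhalf⟩ := (hmin.mul_right (by omega)).exists_halfCancels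
  rw [mem_pairSet] at hp hq
  rcases hp with hp | hp | hp | hp <;> rcases hq with hq | hq | hq | hq <;> subst p q <;>
    simp only [HalfCancels, inv_inv, norm_inv_eq, ne_eq, not_true_eq_false] at hpq hpq' hhalf <;>
    omega

end IsMinCounterexample

theorem isConjUpToInv_commutator_of_closure_eq_top {x y : F2} (h : closure {x, y} = ⊤) :
    IsConjUpToInv ⁅x, y⁆ ⁅A, B⁆ := by
  by_contra hxy
  obtain ⟨x₀, y₀, hmin⟩ := IsCounterexample.exists_isMinCounterexample ⟨h, hxy⟩
  obtain ⟨p, hp, q, hq, hpq, hpq', hhalf⟩ := hmin.exists_halfCancels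
  exact (hmin.of_mem_pairSet hp hq hpq hpq').not_halfCancels hhalf

theorem stmt_0 (φ : F2 ≃* F2) :
    IsConj (φ (A * B * A⁻¹ * B⁻¹)) (A * B * A⁻¹ * B⁻¹) ∨
      IsConj (φ (A * B * A⁻¹ * B⁻¹)) (B * A * B⁻¹ * A⁻¹) := by
  have hAB : closure {A, B} = ⊤ := by
    rw [Set.pair_comm, A, B, ← Bool.range_eq, FreeGroup.closure_range_of]
  have hcl : closure {φ A, φ B} = ⊤ := by
    rw [← Set.image_pair, ← MulEquiv.coe_toMonoidHom, ← MonoidHom.map_closure, hAB,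
      map_top_of_surjective _ φ.surjective]
  have h := isConjUpToInv_commutator_of_closure_eq_top hcl
  rwa [IsConjUpToInv, ← map_commutatorElement, commutatorElement_inv, commutatorElement_def,
    commutatorElement_def] at h
end

section
/- If w in F(A,B) has the form w = AB^{n₁}⋯AB^{n_j} with j ≥ 1 and each n_i ∈ {e, e+1} for some e > 0, then the automorphism of F(A,B) defined by A ↦ AB^{-e}, B ↦ B sends w to a word of strictly smaller length, provided e ≥ 1. -/
/-!
Both `w` and `φ w` are positive words: `φ (A * B ^ n) = A * B ^ (n - e)` and every `n i ≥ e`.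
A product of generators with no inverses is already reduced, so the length of
`∏ A * B ^ kᵢ` is `j + ∑ kᵢ`, and `φ` shortens `w` by exactly `j * e > 0`.
-/

namespace FreeGroup

variable {α : Type*}

theorem isReduced_map_pair_true (l : List α) : FreeGroup.IsReduced (l.map (·, true)) := by
  rw [FreeGroup.IsReduced, List.isChain_map]
  exact (List.pairwise_of_forall fun _ _ _ => rfl).isChain

theorem prod_map_of (l : List α) : (l.map of).prod = mk (l.map (·, true)) := by
  induction l with
  | nil => rfl
  | cons a l ih => simp only [List.map_cons, List.prod_cons, ih]; rfl

theorem toWord_prod_map_of [DecidableEq α] (l : List α) :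
    (l.map of).prod.toWord = l.map (·, true) := by
  rw [prod_map_of, toWord_mk, (isReduced_map_pair_true l).reduce_eq]

theorem prod_map_prod_map_of (Ls : List (List α)) :
    (Ls.map fun l => (l.map of).prod).prod = (Ls.flatten.map of).prod := by
  rw [List.map_flatten, List.prod_flatten, List.map_map]
  rfl

theorem of_mul_of_pow (a b : α) (k : ℕ) :
    of a * of b ^ k = ((a :: List.replicate k b).map of).prod := by
  simp [List.prod_replicate]

theorem toWord_length_prod_of_mul_of_zpow [DecidableEq α] (a b : α) {j : ℕ} (k : Fin j → ℤ)
    (hk : ∀ i, 0 ≤ k i) :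
    (((List.ofFn fun i => of a * of b ^ k i).prod).toWord.length : ℤ) = j + ∑ i, k i := by
  have hfactor : ∀ i, of a * of b ^ k i = ((a :: List.replicate (k i).toNat b).map of).prod :=
    fun i => by rw [← of_mul_of_pow, ← zpow_natCast, Int.toNat_of_nonneg (hk i)]
  have hprod : (List.ofFn fun i => of a * of b ^ k i).prod =
      ((List.ofFn fun i => a :: List.replicate (k i).toNat b).flatten.map of).prod := by
    rw [← prod_map_prod_map_of, List.map_ofFn]
    exact congrArg _ (congrArg _ (funext hfactor))
  rw [hprod, toWord_prod_map_of, List.length_map, List.length_flatten, List.map_ofFn,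
    List.sum_ofFn]
  simp [Finset.sum_add_distrib, Int.toNat_of_nonneg (hk _), add_comm]

end FreeGroup

lemma lift_A_mul_B_zpow (e n : ℤ) :
    FreeGroup.lift (fun b => if b then A * B ^ (-e) else B) (A * B ^ n) = A * B ^ (n - e) := by
  rw [map_mul, map_zpow, A, B, FreeGroup.lift_apply_of, FreeGroup.lift_apply_of]
  simp only [if_pos, if_neg, Bool.false_eq_true, not_false_eq_true]
  rw [mul_assoc, ← zpow_add, neg_add_eq_sub]

theorem stmt_2 (j : ℕ) (hj : 1 ≤ j) (e : ℤ) (he : 1 ≤ e) (n : Fin j → ℤ)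
    (hn : ∀ i, n i = e ∨ n i = e + 1)
    (w : F2) (hw : w = (List.ofFn fun i => A * B ^ (n i)).prod)
    (φ : F2 →* F2) (hφ : φ = FreeGroup.lift fun b => if b then A * B ^ (-e) else B) :
    (φ w).toWord.length < w.toWord.length := by
  have hen : ∀ i, e ≤ n i := fun i => by rcases hn i with h | h <;> omega
  have hφw : φ w = (List.ofFn fun i => A * B ^ (n i - e)).prod := by
    rw [hw, hφ, map_list_prod, List.map_ofFn, Function.comp_def]
    simp only [lift_A_mul_B_zpow]
  have hlen_w : (w.toWord.length : ℤ) = j + ∑ i, n i := by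
    rw [hw]
    exact FreeGroup.toWord_length_prod_of_mul_of_zpow true false n fun i => by linarith [hen i]
  have hlen_φw : ((φ w).toWord.length : ℤ) = j + ∑ i, (n i - e) := by
    rw [hφw]
    exact FreeGroup.toWord_length_prod_of_mul_of_zpow true false _ fun i => sub_nonneg.mpr (hen i)
  have hje : 0 < (j : ℤ) * e := mul_pos (by exact_mod_cast hj) (by linarith)
  rw [← Nat.cast_lt (α := ℤ), hlen_φw, hlen_w, Finset.sum_sub_distrib]
  simp only [Finset.sum_const, Finset.card_univ, Fintype.card_fin, nsmul_eq_mul]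
  linarith
end

section
/- In the free group F(A,B), for every integer n the element A^nBA^{-n}B^{-1} is the image of the commutator ABA⁻¹B⁻¹ under an endomorphism of F(A,B), but for |n| ≥ 2 there is no automorphism of F(A,B) carrying ABA⁻¹B⁻¹ to A^nBA^{-n}B^{-1}. -/
/-!
In the integer Heisenberg group `H`, the commutator `⁅x, y⁆` is central with coordinate the
determinant of the images of `x, y` in `H/[H,H] = ℤ²`. Let `ρ : F(A,B) → H` send `A, B` to the
standard generators. For an automorphism `φ`, the coordinate of `ρ (φ [A,B]) = ⁅ρ φA, ρ φB⁆` is the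
determinant of the action of `φ` on the abelianization, hence `±1`; but `A^n B A^{-n} B^{-1}` is the
commutator `⁅A^n, B⁆`, whose image has coordinate `n`.
-/

open scoped commutatorElement

/-- The integer Heisenberg group; `⟨a, b, c⟩` is the matrix `[[1, a, c], [0, 1, b], [0, 0, 1]]`. -/
@[ext] structure Heis where
  a : ℤ
  b : ℤ
  c : ℤ

namespace Heis

instance : One Heis := ⟨⟨0, 0, 0⟩⟩
instance : Mul Heis := ⟨fun x y => ⟨x.a + y.a, x.b + y.b, x.c + y.c + x.a * y.b⟩⟩
instance : Inv Heis := ⟨fun x => ⟨-x.a, -x.b, -x.c + x.a * x.b⟩⟩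

@[simp] lemma mul_a (x y : Heis) : (x * y).a = x.a + y.a := rfl
@[simp] lemma mul_b (x y : Heis) : (x * y).b = x.b + y.b := rfl
@[simp] lemma mul_c (x y : Heis) : (x * y).c = x.c + y.c + x.a * y.b := rfl
@[simp] lemma one_a : (1 : Heis).a = 0 := rfl
@[simp] lemma one_b : (1 : Heis).b = 0 := rfl
@[simp] lemma one_c : (1 : Heis).c = 0 := rfl
@[simp] lemma inv_a (x : Heis) : x⁻¹.a = -x.a := rfl
@[simp] lemma inv_b (x : Heis) : x⁻¹.b = -x.b := rfl
@[simp] lemma inv_c (x : Heis) : x⁻¹.c = -x.c + x.a * x.b := rfl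

instance : Group Heis where
  mul_assoc x y z := by ext <;> simp only [mul_a, mul_b, mul_c] <;> ring
  one_mul x := by ext <;> simp
  mul_one x := by ext <;> simp
  inv_mul_cancel x := by ext <;> simp only [mul_a, mul_b, mul_c, inv_a, inv_b, inv_c, one_a,
    one_b, one_c] <;> ring

@[simp] lemma zpow_a (x : Heis) (n : ℤ) : (x ^ n).a = n * x.a := by
  induction n using Int.induction_on with
  | zero => simp
  | succ k ih => rw [zpow_add_one, mul_a, ih]; ring
  | pred k ih => rw [zpow_sub_one, mul_a, inv_a, ih]; ring

@[simp] lemma commutatorElement_c (x y : Heis) : ⁅x, y⁆.c = x.a * y.b - x.b * y.a := by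
  simp only [commutatorElement_def, mul_a, mul_c, inv_a, inv_b, inv_c]
  ring

end Heis

noncomputable def rho : F2 →* Heis :=
  FreeGroup.lift fun t => if t then ⟨1, 0, 0⟩ else ⟨0, 1, 0⟩

@[simp] lemma rho_A : rho A = ⟨1, 0, 0⟩ := by simp [rho, A]
@[simp] lemma rho_B : rho B = ⟨0, 1, 0⟩ := by simp [rho, B]

lemma apply_ab_eq_rho_ab (ψ : F2 →* Heis) (g : F2) :
    (ψ g).a = (ψ A).a * (rho g).a + (ψ B).a * (rho g).b ∧
      (ψ g).b = (ψ A).b * (rho g).a + (ψ B).b * (rho g).b := by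
  induction g using FreeGroup.induction_on with
  | C1 => simp
  | of s => cases s <;> simp [rho, A, B]
  | inv_of s ih =>
    simp only [map_inv, Heis.inv_a, Heis.inv_b]
    constructor <;> linarith [ih.1, ih.2]
  | mul x y hx hy =>
    simp only [map_mul, Heis.mul_a, Heis.mul_b]
    constructor <;> linarith [hx.1, hx.2, hy.1, hy.2]

def abDet (ψ : F2 →* Heis) : ℤ := (ψ A).a * (ψ B).b - (ψ A).b * (ψ B).a

lemma abDet_comp (ψ : F2 →* Heis) (φ : F2 →* F2) :
    abDet (ψ.comp φ) = abDet ψ * abDet (rho.comp φ) := by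
  obtain ⟨hAa, hAb⟩ := apply_ab_eq_rho_ab ψ (φ A)
  obtain ⟨hBa, hBb⟩ := apply_ab_eq_rho_ab ψ (φ B)
  simp only [abDet, MonoidHom.comp_apply, hAa, hAb, hBa, hBb]
  ring

lemma abDet_rho : abDet rho = 1 := by simp [abDet]

lemma isUnit_abDet_rho_comp (e : F2 ≃* F2) : IsUnit (abDet (rho.comp e)) := by
  refine IsUnit.of_mul_eq_one (abDet (rho.comp e.symm)) ?_
  rw [← abDet_comp, MonoidHom.comp_assoc, MulEquiv.coe_monoidHom_comp_coe_monoidHom_symm,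
    MonoidHom.comp_id, abDet_rho]

lemma abDet_eq_apply_commutator_c (ψ : F2 →* Heis) : abDet ψ = (ψ ⁅A, B⁆).c := by
  rw [map_commutatorElement, Heis.commutatorElement_c, abDet]

theorem stmt_6 (n : ℤ) :
    (∃ φ : F2 →* F2, φ (A * B * A⁻¹ * B⁻¹) = A ^ n * B * A ^ (-n) * B⁻¹) ∧
      (2 ≤ |n| → ¬ ∃ φ : F2 ≃* F2, φ (A * B * A⁻¹ * B⁻¹) = A ^ n * B * A ^ (-n) * B⁻¹) := by
  have commutator_eq (x : F2) : x * B * x⁻¹ * B⁻¹ = ⁅x, B⁆ := rfl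
  rw [zpow_neg, commutator_eq, commutator_eq]
  constructor
  · exact ⟨FreeGroup.lift fun t => if t then A ^ n else B, by simp [A, B]⟩
  · rintro hn ⟨φ, hφ⟩
    have hdet : abDet (rho.comp φ) = n := by
      rw [abDet_eq_apply_commutator_c, MonoidHom.comp_apply, MonoidHom.coe_coe, hφ,
        map_commutatorElement, Heis.commutatorElement_c]
      simp
    rcases Int.isUnit_iff.mp (hdet ▸ isUnit_abDet_rho_comp φ) with rfl | rfl <;> simp at hn
end

section
/- Let w = A^{m₁}B⋯A^{m_j}B be a cyclic word with j > 1 and {m₁,…,m_j} = {e, e+1} for some e ≥ 1, where both values e and e+1 occur among the m_i; let a be the number of indices i with m_i = e and b the number of indices i with m_i = e+1. If w is primitive in F(A,B), then gcd(a, b) = 1. -/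
/-- The abelianization map `F2 →* ℤ²` (written multiplicatively). -/
def abz : F2 →* Multiplicative (ℤ × ℤ) :=
  FreeGroup.lift fun t => Multiplicative.ofAdd (if t then ((1:ℤ),(0:ℤ)) else (0,1))

def lin (u v : ℤ × ℤ) : (ℤ × ℤ) →+ (ℤ × ℤ) where
  toFun z := z.1 • u + z.2 • v
  map_zero' := by simp
  map_add' := by intro x y; simp [add_smul]; abel

lemma ab_comp (f : F2 →* F2) (g : F2) :
    Multiplicative.toAdd (abz (f g)) =
      lin (Multiplicative.toAdd (abz (f A))) (Multiplicative.toAdd (abz (f B)))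
        (Multiplicative.toAdd (abz g)) := by
  have h : abz.comp f =
      (AddMonoidHom.toMultiplicative (lin (Multiplicative.toAdd (abz (f A)))
        (Multiplicative.toAdd (abz (f B))))).comp abz := by
    apply FreeGroup.ext_hom
    intro x
    cases x <;> simp [abz, A, B, lin]
  have := DFunLike.congr_fun h g
  exact congrArg Multiplicative.toAdd this

lemma det_unit (σ : F2 ≃* F2) :
    (Multiplicative.toAdd (abz (σ A))).1 * (Multiplicative.toAdd (abz (σ B))).2 -
    (Multiplicative.toAdd (abz (σ A))).2 * (Multiplicative.toAdd (abz (σ B))).1 = 1 ∨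
    (Multiplicative.toAdd (abz (σ A))).1 * (Multiplicative.toAdd (abz (σ B))).2 -
    (Multiplicative.toAdd (abz (σ A))).2 * (Multiplicative.toAdd (abz (σ B))).1 = -1 := by
  set u := Multiplicative.toAdd (abz (σ A)) with hu
  set v := Multiplicative.toAdd (abz (σ B)) with hv
  set u' := Multiplicative.toAdd (abz (σ.symm A)) with hu'
  set v' := Multiplicative.toAdd (abz (σ.symm B)) with hv'
  have h1 : Multiplicative.toAdd (abz ((σ : F2 →* F2) ((σ.symm : F2 →* F2) A))) =
      lin u v (Multiplicative.toAdd (abz ((σ.symm : F2 →* F2) A))) := ab_comp _ _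
  have h2 : Multiplicative.toAdd (abz ((σ : F2 →* F2) ((σ.symm : F2 →* F2) B))) =
      lin u v (Multiplicative.toAdd (abz ((σ.symm : F2 →* F2) B))) := ab_comp _ _
  simp only [MonoidHom.coe_coe, MulEquiv.apply_symm_apply] at h1 h2
  have hA : Multiplicative.toAdd (abz A) = ((1:ℤ), (0:ℤ)) := by simp [abz, A]
  have hB : Multiplicative.toAdd (abz B) = ((0:ℤ), (1:ℤ)) := by simp [abz, B]
  rw [hA, ← hu'] at h1
  rw [hB, ← hv'] at h2
  have e11 : u'.1 * u.1 + u'.2 * v.1 = 1 := by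
    have := congrArg Prod.fst h1; simpa [lin, mul_comm] using this.symm
  have e12 : u'.1 * u.2 + u'.2 * v.2 = 0 := by
    have := congrArg Prod.snd h1; simpa [lin, mul_comm] using this.symm
  have e21 : v'.1 * u.1 + v'.2 * v.1 = 0 := by
    have := congrArg Prod.fst h2; simpa [lin, mul_comm] using this.symm
  have e22 : v'.1 * u.2 + v'.2 * v.2 = 1 := by
    have := congrArg Prod.snd h2; simpa [lin, mul_comm] using this.symm
  have key : (u.1 * v.2 - u.2 * v.1) * (u'.1 * v'.2 - u'.2 * v'.1) = 1 := by
    linear_combination (v'.1*u.2+v'.2*v.2)*e11 - (v'.1*u.1+v'.2*v.1)*e12 + e22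
  rcases Int.isUnit_iff.mp (IsUnit.of_mul_eq_one _ key) with h | h
  · exact Or.inl h
  · exact Or.inr h

lemma prim_gcd (w : F2) (hprim : IsPrimitive w) :
    Int.gcd (Multiplicative.toAdd (abz w)).1 (Multiplicative.toAdd (abz w)).2 = 1 := by
  obtain ⟨x, y, ⟨σ, hx, hy⟩, hw⟩ := hprim
  rw [← Int.isCoprime_iff_gcd_eq_one]
  rcases det_unit σ with h | h <;>
    rw [hx, hy] at h <;>
    rcases hw with rfl | rfl
  · exact ⟨(Multiplicative.toAdd (abz y)).2, -(Multiplicative.toAdd (abz y)).1, by linarith [h]⟩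
  · exact ⟨-(Multiplicative.toAdd (abz x)).2, (Multiplicative.toAdd (abz x)).1, by linarith [h]⟩
  · exact ⟨-(Multiplicative.toAdd (abz y)).2, (Multiplicative.toAdd (abz y)).1, by linarith [h]⟩
  · exact ⟨(Multiplicative.toAdd (abz x)).2, -(Multiplicative.toAdd (abz x)).1, by linarith [h]⟩

lemma abz_term (k : ℤ) : Multiplicative.toAdd (abz (A ^ k * B)) = (k, 1) := by
  rw [map_mul, map_zpow]
  simp [abz, A, B, toAdd_zpow]

lemma abz_w (j : ℕ) (m : Fin j → ℤ) :
    Multiplicative.toAdd (abz ((List.ofFn fun i => A ^ (m i) * B).prod)) =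
      (∑ i, m i, (j : ℤ)) := by
  rw [map_list_prod, List.map_ofFn, List.prod_ofFn, toAdd_prod]
  simp only [Function.comp, abz_term]
  rw [Prod.ext_iff, Prod.fst_sum, Prod.snd_sum]
  simp

theorem stmt_8 (j : ℕ) (hj : 1 < j) (e : ℤ) (he : 1 ≤ e) (m : Fin j → ℤ)
    (hm : ∀ i, m i = e ∨ m i = e + 1)
    (hocc₁ : ∃ i, m i = e) (hocc₂ : ∃ i, m i = e + 1)
    (w : F2) (hw : w = (List.ofFn fun i => A ^ (m i) * B).prod)
    (a b : ℕ)
    (ha : a = (Finset.univ.filter fun i => m i = e).card)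
    (hb : b = (Finset.univ.filter fun i => m i = e + 1).card)
    (hprim : IsPrimitive w) :
    Nat.gcd a b = 1 := by
  -- a + b = j
  have hfilter : (Finset.univ.filter fun i => m i = e + 1) =
      (Finset.univ.filter fun i : Fin j => ¬ (m i = e)) := by
    apply Finset.filter_congr
    intro i _
    rcases hm i with h | h <;> simp [h] <;> omega
  have hab : a + b = j := by
    rw [ha, hb, hfilter, Finset.card_filter_add_card_filter_not, Finset.card_univ,
      Fintype.card_fin]
  -- sum of exponents
  have hsum : ∑ i, m i = e * j + b := by
    have : ∀ i : Fin j, m i = e + (if m i = e + 1 then (1:ℤ) else 0) := by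
      intro i
      rcases hm i with h | h <;> simp [h] <;> omega
    rw [Finset.sum_congr rfl fun i _ => this i, Finset.sum_add_distrib, Finset.sum_const,
      Finset.sum_boole, ← hb, Finset.card_univ, Fintype.card_fin]
    push_cast
    ring
  -- coprimality from primitivity
  have hg := prim_gcd w hprim
  rw [hw, abz_w] at hg
  simp only at hg
  rw [hsum] at hg
  have hcop : IsCoprime (e * (j:ℤ) + b) (j:ℤ) := Int.isCoprime_iff_gcd_eq_one.mpr hg
  obtain ⟨u, v, huv⟩ := hcop
  have hcop2 : IsCoprime (b : ℤ) (j : ℤ) := ⟨u, v + u * e, by linear_combination huv⟩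
  have : Nat.gcd b j = 1 := by
    have := Int.isCoprime_iff_gcd_eq_one.mp hcop2
    rwa [Int.gcd_natCast_natCast] at this
  rw [← hab] at this
  rw [Nat.gcd_add_self_right] at this
  rw [Nat.gcd_comm]
  exact this
end

section
/- No proper power w^k (k ≥ 2) of a nontrivial element w of the free group F(A,B) is primitive in F(A,B). -/
lemma MonoidHom.eq_one_of_map_pow_eq_ofAdd_one {G : Type*} [Group G] (χ : G →* Multiplicative ℤ)
    {w : G} {k : ℕ} (h : χ (w ^ k) = Multiplicative.ofAdd 1) : k = 1 := by
  have hmul : (k : ℤ) * (χ w).toAdd = 1 := by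
    simpa only [map_pow, toAdd_pow, toAdd_ofAdd, nsmul_eq_mul] using congrArg Multiplicative.toAdd h
  exact_mod_cast Int.eq_one_of_mul_eq_one_right (Int.natCast_nonneg k) hmul

lemma FreeGroup.exists_monoidHom_map_mulEquiv_of {α : Type*} [DecidableEq α]
    (e : FreeGroup α ≃* FreeGroup α) (b : α) :
    ∃ χ : FreeGroup α →* Multiplicative ℤ, χ (e (of b)) = Multiplicative.ofAdd 1 :=
  ⟨(lift (Pi.mulSingle b (Multiplicative.ofAdd 1))).comp e.symm.toMonoidHom, by simp⟩

lemma IsPrimitive.exists_monoidHom {u : F2} (hu : IsPrimitive u) :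
    ∃ χ : F2 →* Multiplicative ℤ, χ u = Multiplicative.ofAdd 1 := by
  obtain ⟨x, y, ⟨e, rfl, rfl⟩, rfl | rfl⟩ := hu
  · exact FreeGroup.exists_monoidHom_map_mulEquiv_of e true
  · exact FreeGroup.exists_monoidHom_map_mulEquiv_of e false

theorem stmt_9_general (w : F2) (k : ℕ) (hk : 2 ≤ k) : ¬ IsPrimitive (w ^ k) := by
  intro hprim
  obtain ⟨χ, hχ⟩ := hprim.exists_monoidHom
  have := χ.eq_one_of_map_pow_eq_ofAdd_one hχ
  omega

theorem stmt_9 (w : F2) (hw : w ≠ 1) (k : ℕ) (hk : 2 ≤ k) : ¬ IsPrimitive (w ^ k) :=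
  stmt_9_general w k hk
end

section
/- If x and y are elements of a free group F of rank 2 that generate F, then (x, y) is a basis of F; that is, any generating pair of a free group of rank two is a free generating pair. -/
instance MonoidHom.finite_of_fg {G M : Type*} [Group G] [Monoid M] [Group.FG G] [Finite M] :
    Finite (G →* M) := by
  obtain ⟨S, hS, hfin⟩ := Group.fg_iff.mp ‹Group.FG G›
  have : Finite S := hfin
  exact Finite.of_injective (fun f : G →* M => fun s : S => f s)
    fun f g hfg => MonoidHom.eq_of_eqOn_dense hS fun s hs => congrFun hfg ⟨s, hs⟩

theorem Group.ResiduallyFinite.injective_of_surjective {G : Type*} [Group G] [Group.FG G]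
    [Group.ResiduallyFinite G] {f : G →* G} (hf : Function.Surjective f) :
    Function.Injective f := by
  refine (injective_iff_map_eq_one f).mpr fun g hg => of_not_not fun hne => ?_
  obtain ⟨H, hgH⟩ := Group.exists_finiteIndexNormalSubgroup_notMem g hne
  -- `ψ ↦ ψ.comp f` is injective on the finite set `G →* G ⧸ H`, so `mk'` factors through `f`.
  obtain ⟨ψ, hψ⟩ : ∃ ψ : G →* G ⧸ H.toSubgroup, ψ.comp f = QuotientGroup.mk' H.toSubgroup :=
    Finite.surjective_of_injective (fun _ _ => (MonoidHom.cancel_right hf).mp) _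
  refine hgH ((QuotientGroup.eq_one_iff g).mp ?_)
  rw [← QuotientGroup.mk'_apply, ← hψ, MonoidHom.comp_apply, hg, map_one]

section PartialLeftMul

variable {G : Type*} [Group G]

open scoped Classical in
noncomputable def partialLeftMulPerm (T : Set G) [Finite T] (g : G) : Equiv.Perm T :=
  Equiv.extendSubtype (p := fun t : T => g * t ∈ T) (q := fun t : T => g⁻¹ * t ∈ T)
    { toFun := fun t => ⟨⟨g * t, t.2⟩, by simp⟩
      invFun := fun t => ⟨⟨g⁻¹ * t, t.2⟩, by simp⟩
      left_inv := fun t => by simp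
      right_inv := fun t => by simp }

theorem partialLeftMulPerm_apply {T : Set G} [Finite T] {g t : G} (ht : t ∈ T)
    (hgt : g * t ∈ T) : partialLeftMulPerm T g ⟨t, ht⟩ = ⟨g * t, hgt⟩ := by
  classical
  exact Equiv.extendSubtype_apply_of_mem _ (⟨t, ht⟩ : T) hgt

theorem partialLeftMulPerm_inv_apply {T : Set G} [Finite T] {g t : G}
    (ht : t ∈ T) (hgt : g⁻¹ * t ∈ T) : (partialLeftMulPerm T g)⁻¹ ⟨t, ht⟩ = ⟨g⁻¹ * t, hgt⟩ := by
  rw [Equiv.Perm.inv_eq_iff_eq, partialLeftMulPerm_apply hgt (by simpa using ht)]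
  simp

end PartialLeftMul

namespace FreeGroup

variable {α : Type*}

theorem lift_mk_cons {G : Type*} [Group G] (f : α → G) (x : α × Bool) (L : List (α × Bool)) :
    lift f (mk (x :: L)) = cond x.2 (f x.1) (f x.1)⁻¹ * lift f (mk L) := by
  simp only [lift_mk, List.map_cons, List.prod_cons]

theorem lift_partialLeftMulPerm_mk_apply_one {G : Type*} [Group G] (f : α → G) (T : Set G)
    [Finite T] (h1 : (1 : G) ∈ T) (L : List (α × Bool))
    (hL : ∀ s ∈ L.tails, lift f (mk s) ∈ T) :
    lift (fun a => partialLeftMulPerm T (f a)) (mk L) ⟨1, h1⟩ =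
      ⟨lift f (mk L), hL L (by simp)⟩ := by
  induction L with
  | nil => simp
  | cons x L ih =>
    have hxL := hL (x :: L) (by simp)
    simp only [lift_mk_cons] at hxL ⊢
    rw [Equiv.Perm.mul_apply, ih fun s hs => hL s (by simp [hs])]
    obtain ⟨a, _ | _⟩ := x
    · exact partialLeftMulPerm_inv_apply _ hxL
    · exact partialLeftMulPerm_apply _ hxL

instance residuallyFinite : Group.ResiduallyFinite (FreeGroup α) := by
  refine Group.residuallyFinite_of_forall_exists_finite_monoidHom fun w hw => ?_
  classical
  obtain ⟨L, rfl⟩ : ∃ L, mk L = w := ⟨_, mk_toWord⟩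
  set T : Set (FreeGroup α) := mk '' {s | s ∈ L.tails}
  have : Finite T := ((List.finite_toSet _).image _).to_subtype
  have hL : ∀ s ∈ L.tails, lift of (mk s) ∈ T := fun s hs => by
    rw [lift_of_eq_id]; exact ⟨s, hs, rfl⟩
  have h1 : (1 : FreeGroup α) ∈ T := ⟨[], by simp, rfl⟩
  refine ⟨Equiv.Perm T, inferInstance, inferInstance, lift fun a => partialLeftMulPerm T (of a),
    fun hone => hw ?_⟩
  have key := lift_partialLeftMulPerm_mk_apply_one of T h1 L hL
  rw [hone, Equiv.Perm.one_apply, Subtype.mk.injEq, lift_of_eq_id] at key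
  exact key.symm

end FreeGroup

theorem stmt_10 (x y : F2) (h : Subgroup.closure {x, y} = (⊤ : Subgroup F2)) :
    IsBasis x y := by
  set φ : F2 →* F2 := FreeGroup.lift fun b => cond b x y
  have hsurj : Function.Surjective φ := by
    rw [← MonoidHom.range_eq_top, FreeGroup.range_lift_eq_closure, ← h, Bool.range_eq,
      Set.pair_comm]
    rfl
  exact ⟨MulEquiv.ofBijective φ ⟨Group.ResiduallyFinite.injective_of_surjective hsurj, hsurj⟩,
    FreeGroup.lift_apply_of, FreeGroup.lift_apply_of⟩
end

section
/- Let φ be the automorphism of F(A,B) with φ(A) = A, φ(B) = AB. Then for every cyclically reduced word w in which every syllable of B has exponent 1 and every syllable of A has exponent in {e, e+1} with e ≥ 1, the word φ⁻¹(w) is again of this form with exponents of A in {e-1, e}, after reduction. -/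
theorem apply_zpow_mul_B_eq {f : F2 →* F2} (hfA : f A = A) (hfB : f B = A⁻¹ * B) (k : ℤ) :
    f (A ^ k * B) = A ^ (k - 1) * B := by
  rw [map_mul, map_zpow, hfA, hfB, ← mul_assoc, ← zpow_sub_one]

theorem map_prod_ofFn_zpow_mul_B {f : F2 →* F2} (hfA : f A = A) (hfB : f B = A⁻¹ * B)
    {j : ℕ} (m : Fin j → ℤ) :
    f (List.ofFn fun i => A ^ m i * B).prod = (List.ofFn fun i => A ^ (m i - 1) * B).prod := by
  rw [map_list_prod, List.map_ofFn]
  exact congrArg (List.ofFn · |>.prod) (funext fun i => apply_zpow_mul_B_eq hfA hfB (m i))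

theorem stmt_12_general (φ : F2 ≃* F2) (hφA : φ A = A) (hφB : φ B = A * B)
    (j : ℕ) (e : ℤ) (m : Fin j → ℤ)
    (hm : ∀ i, m i = e ∨ m i = e + 1)
    (w : F2) (hw : w = (List.ofFn fun i => A ^ (m i) * B).prod) :
    ∃ m' : Fin j → ℤ, (∀ i, m' i = e - 1 ∨ m' i = e) ∧
      φ.symm w = (List.ofFn fun i => A ^ (m' i) * B).prod := by
  have hsA : φ.symm A = A := φ.symm_apply_eq.2 hφA.symm
  have hsB : φ.symm B = A⁻¹ * B :=
    φ.symm_apply_eq.2 (by rw [map_mul, map_inv, hφA, hφB, inv_mul_cancel_left])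
  refine ⟨fun i => m i - 1, fun i => ?_, ?_⟩
  · rcases hm i with h | h <;> dsimp only <;> omega
  · subst hw
    exact map_prod_ofFn_zpow_mul_B (f := φ.symm.toMonoidHom) hsA hsB m

theorem stmt_12 (φ : F2 ≃* F2) (hφA : φ A = A) (hφB : φ B = A * B)
    (j : ℕ) (hj : 1 ≤ j) (e : ℤ) (he : 1 ≤ e) (m : Fin j → ℤ)
    (hm : ∀ i, m i = e ∨ m i = e + 1)
    (w : F2) (hw : w = (List.ofFn fun i => A ^ (m i) * B).prod) :
    ∃ m' : Fin j → ℤ, (∀ i, m' i = e - 1 ∨ m' i = e) ∧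
      φ.symm w = (List.ofFn fun i => A ^ (m' i) * B).prod :=
  stmt_12_general φ hφA hφB j e m hm w hw
end

section
/- Suppose Γ ∈ F(A,B) represents the cyclic word A^rB⁻¹A^{-r}B. Then Γ is conjugate to a commutator of a basis of F(A,B) (i.e., there exists a basis (X,Y) of F(A,B) with Γ conjugate to XYX⁻¹Y⁻¹ or its inverse) if and only if |r| ≤ 1 with r ≠ 0, i.e., r = ±1. -/
/-!
Send `F(A,B)` to the discrete Heisenberg group by `A ↦ (1,0,0)`, `B ↦ (0,1,0)`. The commutator
`XYX⁻¹Y⁻¹` goes to the central element whose `z`-coordinate is the determinant of the exponent sums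
of `X` and `Y`; for a basis this determinant is `±1`, because an automorphism of `F(A,B)` induces
an invertible integer matrix on exponent sums. Central elements are conjugate only to themselves,
so conjugate commutators have equal determinants; and `Γ` is the commutator `[A^r, B⁻¹]`, of
determinant `-r`. Conversely, `(A, B⁻¹)` and `(A⁻¹, B⁻¹)` are bases realising `r = 1` and `r = -1`.
-/

@[ext]
structure Heis_s15 (R : Type*) where
  x : R
  y : R
  z : R

namespace Heis_s15

variable {R : Type*} [CommRing R]

-- `(x, y, z)` is the unitriangular matrix `[[1, x, z], [0, 1, y], [0, 0, 1]]`.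
instance : Mul (Heis_s15 R) := ⟨fun p q => ⟨p.x + q.x, p.y + q.y, p.z + q.z + p.x * q.y⟩⟩
instance : One (Heis_s15 R) := ⟨⟨0, 0, 0⟩⟩
instance : Inv (Heis_s15 R) := ⟨fun p => ⟨-p.x, -p.y, -p.z + p.x * p.y⟩⟩

@[simp] lemma mul_x (p q : Heis_s15 R) : (p * q).x = p.x + q.x := rfl
@[simp] lemma mul_y (p q : Heis_s15 R) : (p * q).y = p.y + q.y := rfl
@[simp] lemma mul_z (p q : Heis_s15 R) : (p * q).z = p.z + q.z + p.x * q.y := rfl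
@[simp] lemma one_x : (1 : Heis_s15 R).x = 0 := rfl
@[simp] lemma one_y : (1 : Heis_s15 R).y = 0 := rfl
@[simp] lemma one_z : (1 : Heis_s15 R).z = 0 := rfl
@[simp] lemma inv_x (p : Heis_s15 R) : p⁻¹.x = -p.x := rfl
@[simp] lemma inv_y (p : Heis_s15 R) : p⁻¹.y = -p.y := rfl
@[simp] lemma inv_z (p : Heis_s15 R) : p⁻¹.z = -p.z + p.x * p.y := rfl

instance : Group (Heis_s15 R) where
  mul_assoc _ _ _ := by ext <;> simp <;> ring
  one_mul _ := by ext <;> simp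
  mul_one _ := by ext <;> simp
  inv_mul_cancel _ := by ext <;> simp

lemma commutator_eq (u v : Heis_s15 R) : u * v * u⁻¹ * v⁻¹ = ⟨0, 0, u.x * v.y - u.y * v.x⟩ := by
  ext <;> simp; ring

lemma eq_of_isConj {p q : Heis_s15 R} (h : IsConj p q) (hx : p.x = 0) (hy : p.y = 0) : q = p := by
  obtain ⟨g, rfl⟩ := isConj_iff.mp h
  ext <;> simp [hx, hy]; ring

lemma zpow_x (p : Heis_s15 R) (n : ℤ) : (p ^ n).x = n * p.x := by
  induction n using Int.induction_on with
  | zero => simp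
  | succ k ih => rw [zpow_add_one, mul_x, ih]; push_cast; ring
  | pred k ih => rw [zpow_sub_one, mul_x, inv_x, ih]; push_cast; ring

lemma zpow_y (p : Heis_s15 R) (n : ℤ) : (p ^ n).y = n * p.y := by
  induction n using Int.induction_on with
  | zero => simp
  | succ k ih => rw [zpow_add_one, mul_y, ih]; push_cast; ring
  | pred k ih => rw [zpow_sub_one, mul_y, inv_y, ih]; push_cast; ring

end Heis_s15

def toHeis : F2 →* Heis_s15 ℤ := FreeGroup.lift fun t => if t then ⟨1, 0, 0⟩ else ⟨0, 1, 0⟩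

@[simp] lemma toHeis_A : toHeis A = ⟨1, 0, 0⟩ := by simp [toHeis, A]
@[simp] lemma toHeis_B : toHeis B = ⟨0, 1, 0⟩ := by simp [toHeis, B]

def expSumA (w : F2) : ℤ := (toHeis w).x
def expSumB (w : F2) : ℤ := (toHeis w).y

@[simp] lemma expSumA_one : expSumA 1 = 0 := by simp [expSumA]
@[simp] lemma expSumB_one : expSumB 1 = 0 := by simp [expSumB]
@[simp] lemma expSumA_mul (u v : F2) : expSumA (u * v) = expSumA u + expSumA v := by simp [expSumA]
@[simp] lemma expSumB_mul (u v : F2) : expSumB (u * v) = expSumB u + expSumB v := by simp [expSumB]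
@[simp] lemma expSumA_inv (u : F2) : expSumA u⁻¹ = -expSumA u := by simp [expSumA]
@[simp] lemma expSumB_inv (u : F2) : expSumB u⁻¹ = -expSumB u := by simp [expSumB]
@[simp] lemma expSumA_zpow (u : F2) (n : ℤ) : expSumA (u ^ n) = n * expSumA u := by
  simp [expSumA, Heis_s15.zpow_x]
@[simp] lemma expSumB_zpow (u : F2) (n : ℤ) : expSumB (u ^ n) = n * expSumB u := by
  simp [expSumB, Heis_s15.zpow_y]
@[simp] lemma expSumA_A : expSumA A = 1 := by simp [expSumA]
@[simp] lemma expSumA_B : expSumA B = 0 := by simp [expSumA]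
@[simp] lemma expSumB_A : expSumB A = 0 := by simp [expSumB]
@[simp] lemma expSumB_B : expSumB B = 1 := by simp [expSumB]

lemma expSum_map (g : F2 →* F2) (w : F2) :
    expSumA (g w) = expSumA (g A) * expSumA w + expSumA (g B) * expSumB w ∧
    expSumB (g w) = expSumB (g A) * expSumA w + expSumB (g B) * expSumB w := by
  induction w using FreeGroup.induction_on with
  | C1 => simp
  | of t =>
    cases t <;> simp [show FreeGroup.of true = A from rfl, show FreeGroup.of false = B from rfl]
  | inv_of _ ih => simp only [map_inv, expSumA_inv, expSumB_inv, ih.1, ih.2]; constructor <;> ring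
  | mul _ _ ihu ihv =>
    simp only [map_mul, expSumA_mul, expSumB_mul, ihu.1, ihu.2, ihv.1, ihv.2]
    constructor <;> ring

def expSumDet (u v : F2) : ℤ := expSumA u * expSumB v - expSumB u * expSumA v

lemma expSumDet_swap (u v : F2) : expSumDet v u = -expSumDet u v := by
  simp only [expSumDet]; ring

@[simp] lemma expSumDet_A_B : expSumDet A B = 1 := by simp [expSumDet]

lemma expSumDet_map (g : F2 →* F2) (u v : F2) :
    expSumDet (g u) (g v) = expSumDet (g A) (g B) * expSumDet u v := by
  simp only [expSumDet, (expSum_map g u).1, (expSum_map g u).2, (expSum_map g v).1,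
    (expSum_map g v).2]
  ring

lemma IsBasis.expSumDet_eq_one_or_neg_one {X Y : F2} (h : IsBasis X Y) :
    expSumDet X Y = 1 ∨ expSumDet X Y = -1 := by
  obtain ⟨e, rfl, rfl⟩ := h
  have h1 := expSumDet_map e.symm.toMonoidHom (e A) (e B)
  simp only [MulEquiv.coe_toMonoidHom, MulEquiv.symm_apply_apply, expSumDet_A_B] at h1
  exact Int.eq_one_or_neg_one_of_mul_eq_one ((mul_comm _ _).trans h1.symm)

lemma toHeis_commutator (u v : F2) :
    toHeis (u * v * u⁻¹ * v⁻¹) = ⟨0, 0, expSumDet u v⟩ := by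
  simp only [map_mul, map_inv, Heis_s15.commutator_eq]
  rfl

lemma expSumDet_eq_of_isConj_commutator {u v X Y : F2}
    (h : IsConj (u * v * u⁻¹ * v⁻¹) (X * Y * X⁻¹ * Y⁻¹)) : expSumDet u v = expSumDet X Y := by
  have h' := toHeis.map_isConj h
  rw [toHeis_commutator, toHeis_commutator] at h'
  exact congrArg Heis_s15.z (Heis_s15.eq_of_isConj h' rfl rfl).symm

def FreeGroup.invertGenerator {α : Type*} [DecidableEq α] (a : α) : FreeGroup α ≃* FreeGroup α :=
  let f := FreeGroup.lift fun b => if b = a then (FreeGroup.of b)⁻¹ else FreeGroup.of b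
  have hf : f.comp f = MonoidHom.id _ := FreeGroup.ext_hom _ _ fun b => by
    by_cases hb : b = a <;> simp [f, hb]
  f.toMulEquiv f hf hf

@[simp] lemma FreeGroup.invertGenerator_of {α : Type*} [DecidableEq α] (a b : α) :
    FreeGroup.invertGenerator a (FreeGroup.of b) =
      if b = a then (FreeGroup.of b)⁻¹ else FreeGroup.of b := by
  simp [FreeGroup.invertGenerator]

lemma isBasis_A_B : IsBasis A B := ⟨MulEquiv.refl _, rfl, rfl⟩

lemma IsBasis.inv_left {X Y : F2} (h : IsBasis X Y) : IsBasis X⁻¹ Y := by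
  obtain ⟨e, rfl, rfl⟩ := h
  exact ⟨(FreeGroup.invertGenerator true).trans e, by simp [A], by simp [B]⟩

lemma IsBasis.inv_right {X Y : F2} (h : IsBasis X Y) : IsBasis X Y⁻¹ := by
  obtain ⟨e, rfl, rfl⟩ := h
  exact ⟨(FreeGroup.invertGenerator false).trans e, by simp [A], by simp [B]⟩

theorem stmt_15 (r : ℤ) (Γ : F2) (hΓ : Γ = A ^ r * B⁻¹ * A ^ (-r) * B) :
    (∃ X Y : F2, IsBasis X Y ∧
        (IsConj Γ (X * Y * X⁻¹ * Y⁻¹) ∨ IsConj Γ (Y * X * Y⁻¹ * X⁻¹))) ↔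
      (r = 1 ∨ r = -1) := by
  have hΓ' : Γ = A ^ r * B⁻¹ * (A ^ r)⁻¹ * B⁻¹⁻¹ := by rw [hΓ]; group
  have hdetΓ : expSumDet (A ^ r) B⁻¹ = -r := by simp [expSumDet]
  constructor
  · rintro ⟨X, Y, hXY, hconj | hconj⟩ <;> rw [hΓ'] at hconj
    · have := expSumDet_eq_of_isConj_commutator hconj
      rcases hXY.expSumDet_eq_one_or_neg_one with h | h <;> omega
    · have := expSumDet_swap X Y ▸ expSumDet_eq_of_isConj_commutator hconj
      rcases hXY.expSumDet_eq_one_or_neg_one with h | h <;> omega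
  · rintro (rfl | rfl) <;> rw [hΓ']
    · exact ⟨A, B⁻¹, isBasis_A_B.inv_right, Or.inl (by rw [zpow_one])⟩
    · exact ⟨A⁻¹, B⁻¹, isBasis_A_B.inv_left.inv_right, Or.inl (by rw [zpow_neg_one])⟩
end

section
/- If w ∈ F(A,B) is a primitive element whose reduced form contains only positive powers of A and B (a positive word), and w involves both generators, then in the syllable decomposition w = A^{m₁}B^{n₁}⋯A^{m_j}B^{n_j} either all m_i = 1 or all n_i = 1. -/
/-!
Let `p` and `q` be the numbers of letters `A` and `B` in the positive word `w`. If `w` is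
primitive, every homomorphism killing `w` has cyclic image; abelianizing modulo `gcd p q` shows
that `p` and `q` are coprime.

Send `A` to `z ↦ τ ^ q * z + 1` and `B` to `z ↦ τ ^ (-p) * z + s` in the affine group of `ℂ`. The
linear part of `w` is then trivial and its translation part is
`τ ^ (-p * q) * (G(τ) + s * τ ^ p * H(τ))` for polynomials `G`, `H` with natural coefficients.
At a common root `τ ≠ 0` of `G` and `H`, `w` would act trivially for every `s`, so the images of
`A` and `B` would commute, forcing `τ ^ p = τ ^ q = 1`, hence `τ = 1`; but `G(1) = p ≠ 0`.

A telescoping sum gives `(X ^ q - 1) * G = (X ^ p - 1) * H`. As `G` and `H` have no common nonzero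
root, each nonzero root of `G` is a root of `X ^ p - 1` of at least the same multiplicity, so
`deg G - ord₀ G ≤ p`. Two consecutive letters `A` give `G` two nonzero coefficients `q` apart, so
`deg G - ord₀ G ≥ q`. Symmetrically `p ≤ q`, and coprimality forces `p = q = 1`.
-/

open Polynomial

def positiveWord (u : List Bool) : F2 := (u.map FreeGroup.of).prod

@[simp] theorem positiveWord_nil : positiveWord [] = 1 := rfl

@[simp] theorem positiveWord_cons (c : Bool) (u : List Bool) :
    positiveWord (c :: u) = FreeGroup.of c * positiveWord u := rfl

theorem map_positiveWord {M : Type*} [CommMonoid M] (φ : F2 →* M) (u : List Bool) :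
    φ (positiveWord u) = φ A ^ u.count true * φ B ^ u.count false := by
  induction u with
  | nil => simp
  | cons c u ih => cases c <;> simp [ih, A, B, pow_succ] <;> ac_rfl

def syllableWord {j : ℕ} (m n : Fin j → ℕ) : List Bool :=
  (List.ofFn fun i => List.replicate (m i) true ++ List.replicate (n i) false).flatten

theorem positiveWord_syllableWord {j : ℕ} (m n : Fin j → ℕ) :
    positiveWord (syllableWord m n) = (List.ofFn fun i => A ^ m i * B ^ n i).prod := by
  simp [positiveWord, syllableWord, List.map_flatten, List.prod_flatten, List.map_ofFn,
    Function.comp_def, A, B]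

theorem infix_syllableWord_of_two_le_left {j : ℕ} {m n : Fin j → ℕ} {i : Fin j} (h : 2 ≤ m i) :
    [true, true] <:+: syllableWord m n :=
  ((List.infix_replicate_iff.2 (by simpa)).trans (List.prefix_append _ _).isInfix).trans
    (List.infix_of_mem_flatten (List.mem_ofFn.2 ⟨i, rfl⟩))

theorem infix_syllableWord_of_two_le_right {j : ℕ} {m n : Fin j → ℕ} {i : Fin j} (h : 2 ≤ n i) :
    [false, false] <:+: syllableWord m n :=
  ((List.infix_replicate_iff.2 (by simpa)).trans (List.suffix_append _ _).isInfix).trans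
    (List.infix_of_mem_flatten (List.mem_ofFn.2 ⟨i, rfl⟩))

namespace IsPrimitive

variable {w : F2}

theorem exists_mulEquiv_of (hw : IsPrimitive w) :
    ∃ (e : F2 ≃* F2) (c : Bool), e (.of c) = w := by
  obtain ⟨x, y, ⟨e, rfl, rfl⟩, rfl | rfl⟩ := hw
  exacts [⟨e, true, rfl⟩, ⟨e, false, rfl⟩]

theorem exists_forall_mem_zpowers {Γ : Type*} [Group Γ] (hw : IsPrimitive w) {φ : F2 →* Γ}
    (hφ : φ w = 1) : ∃ g : Γ, ∀ x, φ x ∈ Subgroup.zpowers g := by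
  obtain ⟨e, c, rfl⟩ := hw.exists_mulEquiv_of
  set ψ := φ.comp e.toMonoidHom
  have hψ : FreeGroup.lift (ψ ∘ FreeGroup.of) = ψ := FreeGroup.ext_hom _ _ (by simp)
  have hrange : ψ.range ≤ Subgroup.zpowers (ψ (.of !c)) := by
    rw [← hψ, FreeGroup.range_lift_eq_closure, Subgroup.closure_le]
    rintro _ ⟨d, rfl⟩
    cases c <;> cases d <;> simp [ψ, hφ, Subgroup.mem_zpowers]
  refine ⟨ψ (.of !c), fun x => hrange ⟨e.symm x, ?_⟩⟩
  simp [ψ]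

theorem commute_map {Γ : Type*} [Group Γ] (hw : IsPrimitive w) {φ : F2 →* Γ} (hφ : φ w = 1) :
    Commute (φ A) (φ B) := by
  obtain ⟨g, hg⟩ := hw.exists_forall_mem_zpowers hφ
  obtain ⟨k, hk⟩ := Subgroup.mem_zpowers_iff.mp (hg A)
  obtain ⟨l, hl⟩ := Subgroup.mem_zpowers_iff.mp (hg B)
  rw [← hk, ← hl]
  exact Commute.zpow_zpow_self g k l

theorem coprime_count {u : List Bool} (hw : IsPrimitive (positiveWord u)) :
    (u.count true).Coprime (u.count false) := by
  set d := (u.count true).gcd (u.count false)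
  let φ : F2 →* Multiplicative (ZMod d × ZMod d) :=
    FreeGroup.lift fun c => .ofAdd (if c then (1, 0) else (0, 1))
  have hφ : φ (positiveWord u) = 1 := by
    rw [map_positiveWord]
    simp [φ, A, B, ← ofAdd_nsmul, ← ofAdd_add, ZMod.natCast_eq_zero_iff, d,
      Nat.gcd_dvd_left, Nat.gcd_dvd_right]
  obtain ⟨g, hg⟩ := hw.exists_forall_mem_zpowers hφ
  obtain ⟨k, hk⟩ := Subgroup.mem_zpowers_iff.mp (hg A)
  obtain ⟨l, hl⟩ := Subgroup.mem_zpowers_iff.mp (hg B)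
  obtain ⟨hk₁, hk₂⟩ : k * (g.toAdd.1 : ZMod d) = 1 ∧ k * g.toAdd.2 = 0 := by
    simpa [φ, A, Prod.ext_iff] using congrArg Multiplicative.toAdd hk
  obtain ⟨-, hl₂⟩ : l * (g.toAdd.1 : ZMod d) = 0 ∧ l * g.toAdd.2 = 1 := by
    simpa [φ, B, Prod.ext_iff] using congrArg Multiplicative.toAdd hl
  rw [Nat.Coprime, ← ZMod.one_eq_zero_iff]
  linear_combination l * g.toAdd.1 * hk₂ - l * g.toAdd.2 * hk₁ - hl₂

end IsPrimitive

section RootCounting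

theorem natTrailingDegree_add_le_natDegree {R : Type*} [Semiring R] {P : R[X]} {e d : ℕ}
    (h₁ : P.coeff e ≠ 0) (h₂ : P.coeff (e + d) ≠ 0) : P.natTrailingDegree + d ≤ P.natDegree := by
  have := natTrailingDegree_le_of_ne_zero h₁
  have := le_natDegree_of_ne_zero h₂
  omega

theorem rootMultiplicity_le_of_mul_eq_mul {R : Type*} [CommRing R] [IsDomain R]
    {U V P Q : R[X]} {τ : R} (h : U * P = V * Q) (hUP : U * P ≠ 0)
    (hτ : ¬ (P.IsRoot τ ∧ Q.IsRoot τ)) : rootMultiplicity τ P ≤ rootMultiplicity τ V := by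
  by_cases hP : P.IsRoot τ
  · have hQ : rootMultiplicity τ Q = 0 := rootMultiplicity_eq_zero fun hQ => hτ ⟨hP, hQ⟩
    calc rootMultiplicity τ P ≤ rootMultiplicity τ (U * P) := by
          rw [rootMultiplicity_mul hUP]; exact Nat.le_add_left _ _
      _ = rootMultiplicity τ V := by
          rw [h, rootMultiplicity_mul (h ▸ hUP), hQ, add_zero]
  · simp [rootMultiplicity_eq_zero hP]

variable {K : Type*} [Field K] [IsAlgClosed K]

theorem natDegree_le_natTrailingDegree_add {P Q : K[X]} (hQ : Q ≠ 0)
    (h : ∀ τ ≠ 0, rootMultiplicity τ P ≤ rootMultiplicity τ Q) :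
    P.natDegree ≤ P.natTrailingDegree + Q.natDegree := by
  classical
  have hXQ : X ^ P.natTrailingDegree * Q ≠ 0 := mul_ne_zero (pow_ne_zero _ X_ne_zero) hQ
  have hroots : P.roots ≤ (X ^ P.natTrailingDegree * Q).roots := by
    refine Multiset.le_iff_count.mpr fun τ => ?_
    rw [count_roots, count_roots, rootMultiplicity_mul hXQ]
    rcases eq_or_ne τ 0 with rfl | hτ
    · rw [rootMultiplicity_eq_natTrailingDegree', ← sub_zero X, ← C_0,
        rootMultiplicity_X_sub_C_pow]
      exact Nat.le_add_right _ _
    · rw [rootMultiplicity_eq_zero (p := X ^ _) (by simp [hτ]), zero_add]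
      exact h τ hτ
  calc P.natDegree = Multiset.card P.roots := IsAlgClosed.card_roots_eq_natDegree.symm
    _ ≤ Multiset.card (X ^ P.natTrailingDegree * Q).roots := Multiset.card_le_card hroots
    _ ≤ (X ^ P.natTrailingDegree * Q).natDegree := card_roots' _
    _ = P.natTrailingDegree + Q.natDegree := by
      rw [natDegree_mul (pow_ne_zero _ X_ne_zero) hQ, natDegree_X_pow]

theorem natDegree_le_natTrailingDegree_add_of_mul_eq_mul {P Q : K[X]} {p q : ℕ} (hp : 0 < p)
    (hq : 0 < q) (hP : P ≠ 0) (h : (X ^ q - 1) * P = (X ^ p - 1) * Q)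
    (hroot : ∀ τ ≠ 0, ¬ (P.IsRoot τ ∧ Q.IsRoot τ)) :
    P.natDegree ≤ P.natTrailingDegree + p := by
  have hX (n : ℕ) (hn : 0 < n) : (X ^ n - 1 : K[X]) ≠ 0 := by
    simpa using X_pow_sub_C_ne_zero hn (1 : K)
  have := natDegree_le_natTrailingDegree_add (hX p hp) fun τ hτ =>
    rootMultiplicity_le_of_mul_eq_mul h (mul_ne_zero (hX q hq) hP) (hroot τ hτ)
  rwa [← C_1, natDegree_X_pow_sub_C] at this

end RootCounting

noncomputable section LetterPolynomials

/- A letter `c` of `u` contributes `X ^ (q * #(A before c) + p * #(B after c))` to `polyA` if it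
is an `A` and to `polyB` if it is a `B`. -/
def polyA (R : Type*) [Semiring R] (p q : ℕ) : List Bool → R[X]
  | [] => 0
  | true :: u => X ^ (p * u.count false) + X ^ q * polyA R p q u
  | false :: u => polyA R p q u

def polyB (R : Type*) [Semiring R] (p q : ℕ) : List Bool → R[X]
  | [] => 0
  | true :: u => X ^ q * polyB R p q u
  | false :: u => X ^ (p * u.count false) + polyB R p q u

variable {R : Type*} (p q : ℕ)

theorem map_polyA [Semiring R] {S : Type*} [Semiring S] (f : R →+* S) (u : List Bool) :
    (polyA R p q u).map f = polyA S p q u := by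
  induction u with
  | nil => simp [polyA]
  | cons c u ih => cases c <;> simp [polyA, ih]

theorem map_polyB [Semiring R] {S : Type*} [Semiring S] (f : R →+* S) (u : List Bool) :
    (polyB R p q u).map f = polyB S p q u := by
  induction u with
  | nil => simp [polyB]
  | cons c u ih => cases c <;> simp [polyB, ih]

theorem eval_one_polyA [CommSemiring R] (u : List Bool) :
    (polyA R p q u).eval 1 = u.count true := by
  induction u with
  | nil => simp [polyA]
  | cons c u ih => cases c <;> simp [polyA, ih, add_comm]

theorem eval_one_polyB [CommSemiring R] (u : List Bool) :
    (polyB R p q u).eval 1 = u.count false := by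
  induction u with
  | nil => simp [polyB]
  | cons c u ih => cases c <;> simp [polyB, ih, add_comm]

theorem X_pow_sub_one_mul_polyA_add_X_pow [CommRing R] (u : List Bool) :
    (X ^ q - 1) * polyA R p q u + X ^ (p * u.count false)
      = (X ^ p - 1) * polyB R p q u + X ^ (q * u.count true) := by
  induction u with
  | nil => simp [polyA, polyB]
  | cons c u ih =>
    cases c
    · simp [polyA, polyB]
      linear_combination ih
    · simp [polyA, polyB]
      linear_combination X ^ q * ih

theorem exists_coeff_polyA_ne_zero {u : List Bool} (h : [true, true] <:+: u) :
    ∃ e, (polyA ℕ p q u).coeff e ≠ 0 ∧ (polyA ℕ p q u).coeff (e + q) ≠ 0 := by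
  obtain ⟨l, r, rfl⟩ := h
  simp only [List.append_assoc, List.cons_append, List.nil_append]
  induction l with
  | nil =>
    refine ⟨p * r.count false, ?_, ?_⟩ <;>
      simp [polyA, coeff_add, coeff_X_pow, coeff_X_pow_mul]
  | cons c l ih =>
    obtain ⟨e, h₁, h₂⟩ := ih
    cases c
    · exact ⟨e, h₁, h₂⟩
    · refine ⟨e + q, ?_, ?_⟩ <;> simp [polyA, coeff_add, coeff_X_pow_mul, h₁, h₂]

theorem exists_coeff_polyB_ne_zero {u : List Bool} (h : [false, false] <:+: u) :
    ∃ e, (polyB ℕ p q u).coeff e ≠ 0 ∧ (polyB ℕ p q u).coeff (e + p) ≠ 0 := by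
  obtain ⟨l, r, rfl⟩ := h
  simp only [List.append_assoc, List.cons_append, List.nil_append]
  induction l with
  | nil =>
    refine ⟨p * r.count false, ?_, ?_⟩ <;>
      simp [polyB, coeff_add, coeff_X_pow, mul_add]
  | cons c l ih =>
    obtain ⟨e, h₁, h₂⟩ := ih
    cases c
    · refine ⟨e, ?_, ?_⟩ <;> simp [polyB, coeff_add, h₁, h₂]
    · refine ⟨e + q, ?_, ?_⟩ <;> simp [polyB, coeff_X_pow_mul, h₁, h₂, add_right_comm]

theorem natTrailingDegree_polyA_add_le [Semiring R] [CharZero R] {u : List Bool}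
    (h : [true, true] <:+: u) :
    (polyA R p q u).natTrailingDegree + q ≤ (polyA R p q u).natDegree := by
  obtain ⟨e, h₁, h₂⟩ := exists_coeff_polyA_ne_zero p q h
  rw [← map_polyA p q (Nat.castRingHom R)]
  exact natTrailingDegree_add_le_natDegree (e := e) (by simpa using h₁) (by simpa using h₂)

theorem natTrailingDegree_polyB_add_le [Semiring R] [CharZero R] {u : List Bool}
    (h : [false, false] <:+: u) :
    (polyB R p q u).natTrailingDegree + p ≤ (polyB R p q u).natDegree := by
  obtain ⟨e, h₁, h₂⟩ := exists_coeff_polyB_ne_zero p q h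
  rw [← map_polyB p q (Nat.castRingHom R)]
  exact natTrailingDegree_add_le_natDegree (e := e) (by simpa using h₁) (by simpa using h₂)

end LetterPolynomials

section Affine

variable {K : Type*} [Field K]

def affineRep (τ : Kˣ) (p q : ℕ) (s : K) : F2 →* Equiv.Perm K :=
  FreeGroup.lift fun c => if c then (Units.mulLeft (τ ^ q)).trans (Equiv.addRight 1)
    else (Units.mulLeft (τ ^ p)⁻¹).trans (Equiv.addRight s)

@[simp] theorem affineRep_of_true (τ : Kˣ) (p q : ℕ) (s z : K) :
    affineRep τ p q s (.of true) z = τ ^ q * z + 1 := by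
  simp [affineRep]

@[simp] theorem affineRep_of_false (τ : Kˣ) (p q : ℕ) (s z : K) :
    affineRep τ p q s (.of false) z = (τ : K)⁻¹ ^ p * z + s := by
  simp [affineRep]

theorem pow_mul_affineRep_positiveWord_apply (τ : Kˣ) (p q : ℕ) (s z : K) (u : List Bool) :
    (τ : K) ^ (p * u.count false) * affineRep τ p q s (positiveWord u) z
      = τ ^ (q * u.count true) * z + (polyA K p q u).eval ↑τ
        + s * τ ^ p * (polyB K p q u).eval ↑τ := by
  induction u with
  | nil => simp [polyA, polyB]
  | cons c u ih =>
    cases c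
    · have h : (τ : K) ^ p * (τ : K)⁻¹ ^ p = 1 := by
        rw [← mul_pow, mul_inv_cancel₀ τ.ne_zero, one_pow]
      simp [polyA, polyB, mul_add, pow_add]
      linear_combination ih + τ ^ (p * u.count false) * affineRep τ p q s (positiveWord u) z * h
    · simp [polyA, polyB, mul_add, pow_add]
      linear_combination (τ : K) ^ q * ih

theorem IsPrimitive.eq_one_of_isRoot {u : List Bool} (hw : IsPrimitive (positiveWord u))
    {τ : Kˣ} (hA : (polyA K (u.count true) (u.count false) u).IsRoot τ)
    (hB : (polyB K (u.count true) (u.count false) u).IsRoot τ) : τ = 1 := by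
  set p := u.count true
  set q := u.count false
  have hρ (s : K) : affineRep τ p q s (positiveWord u) = 1 := by
    ext z
    have h := pow_mul_affineRep_positiveWord_apply τ p q s z u
    rw [hA.eq_zero, hB.eq_zero, mul_zero, add_zero, add_zero, mul_comm q p] at h
    exact mul_left_cancel₀ (pow_ne_zero _ τ.ne_zero) h
  have hcomm (s : K) : (τ : K) ^ q * s + 1 = (τ : K)⁻¹ ^ p + s := by
    simpa [A, B] using congrArg (· 0) (hw.commute_map (hρ s)).eq
  have hp : (τ : K) ^ p = 1 := by simpa [eq_comm] using hcomm 0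
  have hq : (τ : K) ^ q = 1 := by simpa [hp] using hcomm 1
  have := pow_gcd_eq_one.mpr ⟨Units.ext (by simpa using hp), Units.ext (by simpa using hq)⟩
  rwa [hw.coprime_count.gcd_eq_one, pow_one] at this

end Affine

theorem not_isPrimitive_positiveWord {u : List Bool} (hA : [true, true] <:+: u)
    (hB : [false, false] <:+: u) : ¬ IsPrimitive (positiveWord u) := by
  intro hw
  set p := u.count true
  set q := u.count false
  have hp : 2 ≤ p := by simpa using hA.sublist.count_le true
  have hq : 2 ≤ q := by simpa using hB.sublist.count_le false
  have hA₁ : (polyA ℂ p q u).eval 1 ≠ 0 := by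
    rw [eval_one_polyA]; exact_mod_cast (by omega : p ≠ 0)
  have hB₁ : (polyB ℂ p q u).eval 1 ≠ 0 := by
    rw [eval_one_polyB]; exact_mod_cast (by omega : q ≠ 0)
  have hroot (τ : ℂ) (hτ : τ ≠ 0) : ¬ ((polyA ℂ p q u).IsRoot τ ∧ (polyB ℂ p q u).IsRoot τ) := by
    rintro ⟨hτA, hτB⟩
    obtain rfl : τ = 1 := congrArg Units.val (hw.eq_one_of_isRoot (τ := .mk0 τ hτ) hτA hτB)
    exact hA₁ hτA
  have hid : (X ^ q - 1) * polyA ℂ p q u = (X ^ p - 1) * polyB ℂ p q u := by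
    have := X_pow_sub_one_mul_polyA_add_X_pow (R := ℂ) p q u
    rw [mul_comm q p] at this
    exact add_right_cancel this
  have hAp := natDegree_le_natTrailingDegree_add_of_mul_eq_mul (by omega) (by omega)
    (fun h => hA₁ (by simp [h])) hid hroot
  have hBq := natDegree_le_natTrailingDegree_add_of_mul_eq_mul (by omega) (by omega)
    (fun h => hB₁ (by simp [h])) hid.symm fun τ hτ => and_comm.not.mp (hroot τ hτ)
  have hAq := natTrailingDegree_polyA_add_le (R := ℂ) p q hA
  have hBp := natTrailingDegree_polyB_add_le (R := ℂ) p q hB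
  have hcop : p.Coprime q := hw.coprime_count
  rw [show q = p by omega, Nat.coprime_self] at hcop
  omega

theorem stmt_18_general (j : ℕ) (m n : Fin j → ℤ)
    (hm : ∀ i, 0 < m i) (hn : ∀ i, 0 < n i)
    (w : F2) (hw : w = (List.ofFn fun i => A ^ (m i) * B ^ (n i)).prod)
    (hprim : IsPrimitive w) :
    (∀ i, m i = 1) ∨ (∀ i, n i = 1) := by
  by_contra! h
  obtain ⟨⟨i, hi⟩, ⟨k, hk⟩⟩ := h
  have hwu : w = positiveWord (syllableWord (fun i => (m i).toNat) fun i => (n i).toNat) := by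
    rw [hw, positiveWord_syllableWord]
    congr! 3 with i
    rw [← zpow_natCast, ← zpow_natCast, Int.toNat_of_nonneg (hm i).le,
      Int.toNat_of_nonneg (hn i).le]
  refine not_isPrimitive_positiveWord ?_ ?_ (hwu ▸ hprim)
  · exact infix_syllableWord_of_two_le_left (i := i) (by have := hm i; omega)
  · exact infix_syllableWord_of_two_le_right (i := k) (by have := hn k; omega)

theorem stmt_18 (j : ℕ) (hj : 1 ≤ j) (m n : Fin j → ℤ)
    (hm : ∀ i, 0 < m i) (hn : ∀ i, 0 < n i)
    (w : F2) (hw : w = (List.ofFn fun i => A ^ (m i) * B ^ (n i)).prod)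
    (hprim : IsPrimitive w) :
    (∀ i, m i = 1) ∨ (∀ i, n i = 1) :=
  stmt_18_general j m n hm hn w hw hprim
end
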